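/- arXiv:math/0602026 — 7 statements merged into one kernel-verified Lean document; each statement's English description precedes it below -/
import Mathlib

section
/- Let G be a finite group and H a subgroup of G. Let R be a set of representatives of the distinct G-conjugacy classes that intersect H. For x ∈ G let f(x) denote the number of G-conjugates of H that contain x. Then the number of H-conjugacy classes in G (i.e., the number of orbits of H acting on G by conjugation) equals (|N_G(H)|/|H|) · Σ_{x ∈ R} f(x). -/
open MulAction Finset

/-- The number of `G`-conjugates of `H` containing `x`. -/
noncomputable def fHG {G : Type*} [Group G] (H : Subgroup G) (x : G) : ℕ :=
  Nat.card {K : Subgroup G //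
    (∃ g : G, K = Subgroup.map (MulAut.conj g).toMonoidHom H) ∧ x ∈ K}

section Aux

variable {G : Type*} [Group G] (H : Subgroup G)

lemma mem_conj_map (g x : G) :
    x ∈ Subgroup.map (MulAut.conj g).toMonoidHom H ↔ g⁻¹ * x * g ∈ H := by
  simp only [Subgroup.mem_map, MulEquiv.coe_toMonoidHom, MulAut.conj_apply]
  constructor
  · rintro ⟨h, hh, rfl⟩; group; simpa
  · intro hx; exact ⟨g⁻¹ * x * g, hx, by group⟩

lemma map_conj_mul (a b : G) :
    Subgroup.map (MulAut.conj a).toMonoidHom (Subgroup.map (MulAut.conj b).toMonoidHom H)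
      = Subgroup.map (MulAut.conj (a * b)).toMonoidHom H := by
  rw [Subgroup.map_map]
  congr 1
  ext x
  simp [mul_assoc]

lemma map_conj_one : Subgroup.map (MulAut.conj (1 : G)).toMonoidHom H = H := by
  ext x
  rw [mem_conj_map]
  simp

lemma mem_normalizer_iff_map (n : G) :
    n ∈ Subgroup.normalizer (H : Set G) ↔ Subgroup.map (MulAut.conj n).toMonoidHom H = H := by
  rw [Subgroup.mem_normalizer_iff]
  constructor
  · intro hn
    ext x
    simp only [Subgroup.mem_map, MulEquiv.coe_toMonoidHom, MulAut.conj_apply]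
    constructor
    · rintro ⟨h, hh, rfl⟩; exact (hn h).mp hh
    · intro hx
      refine ⟨n⁻¹ * x * n, (hn _).mpr ?_, by group⟩
      have : n * (n⁻¹ * x * n) * n⁻¹ = x := by group
      rwa [this]
  · intro hmap h
    constructor
    · intro hh
      rw [← hmap]
      exact ⟨h, hh, rfl⟩
    · intro hh
      have : n * h * n⁻¹ ∈ Subgroup.map (MulAut.conj n).toMonoidHom H := by
        rw [hmap]; exact hh
      obtain ⟨h', hh', heq⟩ := this
      simp only [MulEquiv.coe_toMonoidHom, MulAut.conj_apply] at heq
      have : h' = h := mul_left_cancel (mul_right_cancel heq)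
      rwa [← this]

lemma map_conj_eq_iff (a b : G) :
    Subgroup.map (MulAut.conj a).toMonoidHom H = Subgroup.map (MulAut.conj b).toMonoidHom H
      ↔ b⁻¹ * a ∈ Subgroup.normalizer (H : Set G) := by
  rw [mem_normalizer_iff_map]
  constructor
  · intro hab
    rw [← map_conj_mul, hab, map_conj_mul]
    simpa using map_conj_one H
  · intro hn
    have : Subgroup.map (MulAut.conj b).toMonoidHom
        (Subgroup.map (MulAut.conj (b⁻¹ * a)).toMonoidHom H)
        = Subgroup.map (MulAut.conj b).toMonoidHom H := by rw [hn]
    rwa [map_conj_mul, show b * (b⁻¹ * a) = a by group] at this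

end Aux

section Claim3
open scoped Classical
section Core
open scoped Classical
variable {G : Type*} [Group G] (H : Subgroup G)

lemma core_sum [Fintype G] (R : Finset G)
    (hdist : ∀ x ∈ R, ∀ y ∈ R, IsConj x y → x = y)
    (hall : ∀ g : G, (∃ h ∈ H, IsConj g h) → ∃ x ∈ R, IsConj g x) :
    ∑ x ∈ R, (univ.filter fun g : G => g⁻¹ * x * g ∈ H).card
      = ∑ h ∈ (H : Set G).toFinset, (univ.filter fun g : G => h * g * h⁻¹ = g).card := by
  have step1 : ∀ x : G, (univ.filter fun g : G => g⁻¹ * x * g ∈ H).card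
      = ∑ h ∈ (H : Set G).toFinset, (univ.filter fun g : G => g⁻¹ * x * g = h).card := by
    intro x
    rw [card_eq_sum_card_fiberwise (s := univ.filter fun g : G => g⁻¹ * x * g ∈ H)
      (f := fun g => g⁻¹ * x * g) (t := (H : Set G).toFinset)
      (fun g hg => by
        simp only [Finset.mem_coe, mem_filter, mem_univ, true_and] at hg
        simpa [Set.mem_toFinset] using hg)]
    refine Finset.sum_congr rfl fun h hh => ?_
    congr 1
    ext g
    simp only [mem_filter, mem_univ, true_and, and_iff_right_iff_imp]
    intro hg
    rw [hg]
    simpa [Set.mem_toFinset] using hh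
  simp_rw [step1]
  rw [Finset.sum_comm]
  refine Finset.sum_congr rfl fun h hh => ?_
  rw [Set.mem_toFinset, SetLike.mem_coe] at hh
  have step2 : ∑ x ∈ R, (univ.filter fun g : G => g⁻¹ * x * g = h).card
      = (univ.filter fun g : G => g * h * g⁻¹ ∈ R).card := by
    rw [card_eq_sum_card_fiberwise (s := univ.filter fun g : G => g * h * g⁻¹ ∈ R)
      (f := fun g => g * h * g⁻¹) (t := R)
      (fun g hg => (mem_filter.mp hg).2)]
    refine Finset.sum_congr rfl fun x hx => ?_
    congr 1
    ext g
    simp only [mem_filter, mem_univ, true_and]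
    constructor
    · intro hg
      have : g * h * g⁻¹ = x := by rw [← hg]; group
      exact ⟨this ▸ hx, this⟩
    · rintro ⟨_, hgx⟩
      rw [← hgx]; group
  rw [step2]
  -- now: |{g : g h g⁻¹ ∈ R}| = |{g : h g h⁻¹ = g}|
  obtain ⟨x₀, hx₀R, hconj⟩ := hall h ⟨h, hh, IsConj.refl h⟩
  rw [isConj_iff] at hconj
  obtain ⟨g₀, hg₀'⟩ := hconj
  have hset : (univ.filter fun g : G => g * h * g⁻¹ ∈ R)
      = univ.filter fun g : G => g * h * g⁻¹ = x₀ := by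
    ext g
    simp only [mem_filter, mem_univ, true_and]
    constructor
    · intro hg
      refine (hdist x₀ hx₀R _ hg ?_).symm
      have h1 : IsConj h x₀ := isConj_iff.mpr ⟨g₀, hg₀'⟩
      have h2 : IsConj h (g * h * g⁻¹) := isConj_iff.mpr ⟨g, rfl⟩
      exact h1.symm.trans h2
    · intro hg; rw [hg]; exact hx₀R
  rw [hset]
  refine Finset.card_bij (fun g _ => g₀⁻¹ * g) ?_ ?_ ?_
  · intro g hg
    simp only [mem_filter, mem_univ, true_and] at hg ⊢
    calc h * (g₀⁻¹ * g) * h⁻¹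
        = g₀⁻¹ * (g₀ * h * g₀⁻¹) * g * h⁻¹ := by group
      _ = g₀⁻¹ * (g * h * g⁻¹) * g * h⁻¹ := by rw [hg₀', hg]
      _ = g₀⁻¹ * g := by group
  · intro a _ b _ hab; exact mul_left_cancel hab
  · intro c hc
    simp only [mem_filter, mem_univ, true_and] at hc
    refine ⟨g₀ * c, ?_, by group⟩
    simp only [mem_filter, mem_univ, true_and]
    have hcomm : h * c = c * h := by
      have := congrArg (· * h) hc
      simpa [mul_assoc] using this
    have hch : c * h * c⁻¹ = h := by
      rw [← hcomm]
      simp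
    calc (g₀ * c) * h * (g₀ * c)⁻¹
        = g₀ * (c * h * c⁻¹) * g₀⁻¹ := by group
      _ = x₀ := by rw [hch, hg₀']
end Core
section Claim3
open scoped Classical

variable {G : Type*} [Group G] [Finite G] (H : Subgroup G)

lemma normalizer_mul_fHG [Fintype G] (x : G) :
    Nat.card (Subgroup.normalizer (H : Set G)) * fHG H x
      = (univ.filter fun g : G => g⁻¹ * x * g ∈ H).card := by
  classical
  letI : Fintype (Subgroup G) := Fintype.ofFinite _
  have hf : fHG H x = (univ.filter fun K : Subgroup G =>
      (∃ g : G, K = Subgroup.map (MulAut.conj g).toMonoidHom H) ∧ x ∈ K).card := by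
    rw [fHG, Nat.card_eq_fintype_card, Fintype.card_subtype]
  rw [hf]
  rw [card_eq_sum_card_fiberwise (s := univ.filter fun g : G => g⁻¹ * x * g ∈ H)
    (f := fun g => Subgroup.map (MulAut.conj g).toMonoidHom H)
    (t := univ.filter fun K : Subgroup G =>
      (∃ g : G, K = Subgroup.map (MulAut.conj g).toMonoidHom H) ∧ x ∈ K)
    (fun g hg => by
      simp only [Finset.mem_coe, mem_filter, mem_univ, true_and] at hg ⊢
      exact ⟨⟨g, rfl⟩, (mem_conj_map H g x).mpr hg⟩)]
  rw [Finset.sum_const_nat (m := Nat.card (Subgroup.normalizer (H : Set G))) ?_, mul_comm]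
  intro K hK
  simp only [mem_filter, mem_univ, true_and] at hK
  obtain ⟨⟨g₀, rfl⟩, hxK⟩ := hK
  have hfilter : ((univ.filter fun g : G => g⁻¹ * x * g ∈ H).filter
      fun g => Subgroup.map (MulAut.conj g).toMonoidHom H
        = Subgroup.map (MulAut.conj g₀).toMonoidHom H)
      = univ.filter (fun g : G => Subgroup.map (MulAut.conj g).toMonoidHom H
        = Subgroup.map (MulAut.conj g₀).toMonoidHom H) := by
    ext g
    simp only [mem_filter, mem_univ, true_and, and_iff_right_iff_imp]
    intro hg
    rw [← mem_conj_map H g x, hg]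
    exact hxK
  rw [hfilter]
  have hcard : Nat.card (Subgroup.normalizer (H : Set G)) = (Subgroup.normalizer (H : Set G) : Set G).toFinset.card := by
    rw [Set.toFinset_card, Nat.card_eq_fintype_card]
    rfl
  rw [hcard]
  refine (Finset.card_bij (fun n _ => g₀ * n) ?_ ?_ ?_).symm
  · intro n hn
    simp only [Set.mem_toFinset, SetLike.mem_coe] at hn
    simp only [mem_filter, mem_univ, true_and]
    rw [map_conj_eq_iff]
    simpa using hn
  · intro a _ b _ hab
    exact mul_left_cancel hab
  · intro g hg
    simp only [mem_filter, mem_univ, true_and] at hg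
    rw [map_conj_eq_iff] at hg
    exact ⟨g₀⁻¹ * g, by simpa [Set.mem_toFinset] using hg, by group⟩

end Claim3

section Main
open MulAction
open scoped Classical

/-- Counting formula for the number of `H`-conjugacy classes in a finite group `G`:
`k(H,G) = (|N_G(H)|/|H|) ⬝ Σ_{x ∈ R} f_H^G(x)`, stated multiplied through by `|H|`. -/
theorem stmt_1 {G : Type*} [Group G] [Finite G] (H : Subgroup G) (R : Finset G)
    -- `R` consists of representatives of pairwise distinct conjugacy classes
    (hdist : ∀ x ∈ R, ∀ y ∈ R, IsConj x y → x = y)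
    -- each class represented in `R` meets `H`
    (hmeet : ∀ x ∈ R, ∃ h ∈ H, IsConj x h)
    -- every class meeting `H` is represented in `R`
    (hall : ∀ g : G, (∃ h ∈ H, IsConj g h) → ∃ x ∈ R, IsConj g x) :
    Nat.card {C : Set G // ∃ x : G, C = {y | ∃ h ∈ H, h * x * h⁻¹ = y}} * Nat.card H
      = Nat.card (Subgroup.normalizer (H : Set G)) * ∑ x ∈ R, fHG H x := by
  cases nonempty_fintype G
  set K : Subgroup (ConjAct G) := H.map ConjAct.toConjAct.toMonoidHom with hK
  have horb : ∀ x : G, MulAction.orbit K x = {y | ∃ h ∈ H, h * x * h⁻¹ = y} := by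
    intro x
    ext y
    simp only [mem_orbit_iff, Set.mem_setOf_eq, Subtype.exists]
    constructor
    · rintro ⟨k, hk, rfl⟩
      obtain ⟨h, hh, rfl⟩ := Subgroup.mem_map.mp hk
      exact ⟨h, hh, rfl⟩
    · rintro ⟨h, hh, rfl⟩
      exact ⟨ConjAct.toConjAct h, Subgroup.mem_map.mpr ⟨h, hh, rfl⟩, rfl⟩
  have e1 : Nat.card {C : Set G // ∃ x : G, C = {y | ∃ h ∈ H, h * x * h⁻¹ = y}}
      = Nat.card (orbitRel.Quotient (↥K) G) := by
    refine Nat.card_congr (Equiv.symm (Equiv.ofBijective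
      (fun q => ⟨q.orbit, Quotient.out q, by
        rw [orbitRel.Quotient.orbit_eq_orbit_out _ Quotient.out_eq', horb]⟩) ⟨?_, ?_⟩))
    · intro a b hab
      exact orbitRel.Quotient.orbit_injective (congrArg Subtype.val hab)
    · rintro ⟨C, x, rfl⟩
      exact ⟨Quotient.mk'' x, Subtype.ext (by simp only [orbitRel.Quotient.orbit_mk, horb])⟩
  letI : Fintype (orbitRel.Quotient (↥K) G) := Fintype.ofFinite _
  letI : ∀ a : ↥K, Fintype (fixedBy G a) := fun a => Fintype.ofFinite _
  have burn := MulAction.sum_card_fixedBy_eq_card_orbits_mul_card_group (↥K) G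
  let e : ↥H ≃ ↥K := (Subgroup.equivMapOfInjective H ConjAct.toConjAct.toMonoidHom
    (MulEquiv.injective ConjAct.toConjAct)).toEquiv
  have hre : ∑ a : ↥K, Fintype.card (fixedBy G a)
      = ∑ h ∈ (H : Set G).toFinset, (univ.filter fun g : G => h * g * h⁻¹ = g).card := by
    rw [← Fintype.sum_equiv e (fun h => Fintype.card (fixedBy G (e h)))
      (fun a => Fintype.card (fixedBy G a)) (fun _ => rfl)]
    rw [Finset.sum_subtype (p := (· ∈ H)) (H : Set G).toFinset (fun x => Set.mem_toFinset)
      (fun h : G => (univ.filter fun g : G => h * g * h⁻¹ = g).card)]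
    refine Finset.sum_congr rfl fun h _ => ?_
    rw [← Set.toFinset_card]
    congr 1
    ext g
    simp only [Set.mem_toFinset, MulAction.mem_fixedBy, Finset.mem_filter, Finset.mem_univ,
      true_and]
    rw [show e h • g = ((e h : ↥K) : ConjAct G) • g from rfl,
      show ((e h : ↥K) : ConjAct G) = ConjAct.toConjAct (h : G) from
        Subgroup.coe_equivMapOfInjective_apply H ConjAct.toConjAct.toMonoidHom
          (MulEquiv.injective ConjAct.toConjAct) h,
      ConjAct.smul_def, ConjAct.ofConjAct_toConjAct]
  have hKH : Nat.card ↥K = Nat.card ↥H := Nat.card_congr e.symm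
  calc Nat.card {C : Set G // ∃ x : G, C = {y | ∃ h ∈ H, h * x * h⁻¹ = y}} * Nat.card H
      = Fintype.card (orbitRel.Quotient (↥K) G) * Fintype.card ↥K := by
        rw [e1, Nat.card_eq_fintype_card, ← hKH, Nat.card_eq_fintype_card]
    _ = ∑ a : ↥K, Fintype.card (fixedBy G a) := burn.symm
    _ = ∑ h ∈ (H : Set G).toFinset, (univ.filter fun g : G => h * g * h⁻¹ = g).card := hre
    _ = ∑ x ∈ R, (univ.filter fun g : G => g⁻¹ * x * g ∈ H).card :=
        (core_sum H R hdist hall).symm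
    _ = ∑ x ∈ R, Nat.card (Subgroup.normalizer (H : Set G)) * fHG H x :=
        Finset.sum_congr rfl fun x _ => (normalizer_mul_fHG H x).symm
    _ = Nat.card (Subgroup.normalizer (H : Set G)) * ∑ x ∈ R, fHG H x := by rw [Finset.mul_sum]

end Main
end Claim3
end

section
/- For a finite group G acting on cosets G/H, the number of fixed points of x ∈ G on G/H equals |G·x ∩ H| · [G : H] / |G·x|, where G·x is the conjugacy class of x. -/
section Aux

variable {G : Type*} [Group G]

/-- Fibering `{g // g⁻¹xg ∈ H}` over the fixed points of `x` on `G ⧸ H`,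
with fibers of size `|H|`. -/
noncomputable def fixEquiv (H : Subgroup G) (x : G) :
    {c : G ⧸ H // x • c = c} × H ≃ {g : G // g⁻¹ * x * g ∈ H} where
  toFun p := ⟨p.1.1.out * p.2.1, by
    obtain ⟨⟨c, hc⟩, ⟨h, hh⟩⟩ := p
    have ha : (QuotientGroup.mk c.out : G ⧸ H) = c := Quotient.out_eq c
    have h1 : (QuotientGroup.mk (x * c.out) : G ⧸ H) = QuotientGroup.mk c.out := by
      calc (QuotientGroup.mk (x * c.out) : G ⧸ H) = x • QuotientGroup.mk c.out := rfl
        _ = x • c := by rw [ha]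
        _ = c := hc
        _ = QuotientGroup.mk c.out := ha.symm
    have h2 : (x * c.out)⁻¹ * c.out ∈ H := QuotientGroup.eq.mp h1
    have h3 : c.out⁻¹ * x * c.out ∈ H := by
      have := H.inv_mem h2
      simpa [mul_assoc] using this
    have : (h⁻¹ * (c.out⁻¹ * x * c.out)) * h ∈ H := H.mul_mem (H.mul_mem (H.inv_mem hh) h3) hh
    simpa [mul_assoc] using this⟩
  invFun g := (⟨QuotientGroup.mk g.1, by
      have h2 : (x * g.1)⁻¹ * g.1 ∈ H := by
        have := H.inv_mem g.2
        simpa [mul_assoc] using this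
      show (QuotientGroup.mk (x * g.1) : G ⧸ H) = QuotientGroup.mk g.1
      exact QuotientGroup.eq.mpr h2⟩,
    ⟨(QuotientGroup.mk g.1 : G ⧸ H).out⁻¹ * g.1, by
      exact QuotientGroup.eq.mp (Quotient.out_eq _)⟩)
  left_inv := by
    rintro ⟨⟨c, hc⟩, ⟨h, hh⟩⟩
    have hmk : (QuotientGroup.mk (c.out * h) : G ⧸ H) = c := by
      have : (QuotientGroup.mk (c.out * h) : G ⧸ H) = QuotientGroup.mk c.out := by
        refine QuotientGroup.eq.mpr ?_
        have : (c.out * h)⁻¹ * c.out = h⁻¹ := by group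
        rw [this]; exact H.inv_mem hh
      rw [this]; exact Quotient.out_eq c
    ext
    · exact hmk
    · show (QuotientGroup.mk (c.out * h) : G ⧸ H).out⁻¹ * (c.out * h) = h
      rw [hmk]; group
  right_inv := by
    rintro ⟨g, hg⟩
    ext
    show (QuotientGroup.mk g : G ⧸ H).out * ((QuotientGroup.mk g : G ⧸ H).out⁻¹ * g) = g
    group

/-- Fibering `{g // P (g⁻¹xg)}` over `{y // IsConj x y ∧ P y}`, with fibers of size equal
to the centralizer of `x`. -/
noncomputable def conjEquiv (x : G) (P : G → Prop) :
    {y : G // IsConj x y ∧ P y} × {z : G // z * x = x * z} ≃ {g : G // P (g⁻¹ * x * g)} := by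
  classical
  -- choice of a conjugator for each conjugate
  let σ : (y : G) → IsConj x y → G := fun y hy => (isConj_iff.mp hy).choose
  have hσ : ∀ (y : G) (hy : IsConj x y), (σ y hy) * x * (σ y hy)⁻¹ = y :=
    fun y hy => (isConj_iff.mp hy).choose_spec
  refine
    { toFun := fun p => ⟨p.2.1 * (σ p.1.1 p.1.2.1)⁻¹, ?_⟩
      invFun := fun g => (⟨g.1⁻¹ * x * g.1, ⟨isConj_iff.mpr ⟨g.1⁻¹, by group⟩, g.2⟩⟩,
        ⟨g.1 * σ (g.1⁻¹ * x * g.1) (isConj_iff.mpr ⟨g.1⁻¹, by group⟩), ?_⟩)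
      left_inv := ?_
      right_inv := ?_ }
  · obtain ⟨⟨y, hy, hPy⟩, ⟨z, hz⟩⟩ := p
    have key : (z * (σ y hy)⁻¹)⁻¹ * x * (z * (σ y hy)⁻¹) = y := by
      have h1 : z⁻¹ * x * z = x := by rw [mul_assoc, ← hz]; group
      calc (z * (σ y hy)⁻¹)⁻¹ * x * (z * (σ y hy)⁻¹)
          = σ y hy * (z⁻¹ * x * z) * (σ y hy)⁻¹ := by group
        _ = σ y hy * x * (σ y hy)⁻¹ := by rw [h1]
        _ = y := hσ y hy
    rw [key]; exact hPy
  · -- commutation of g * σ with x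
    set y := g.1⁻¹ * x * g.1 with hydef
    have hy : IsConj x y := isConj_iff.mpr ⟨g.1⁻¹, by rw [hydef]; group⟩
    have h1 : σ y hy * x * (σ y hy)⁻¹ = y := hσ y hy
    have : (g.1 * σ y hy) * x * (g.1 * σ y hy)⁻¹ = x := by
      calc (g.1 * σ y hy) * x * (g.1 * σ y hy)⁻¹
          = g.1 * (σ y hy * x * (σ y hy)⁻¹) * g.1⁻¹ := by group
        _ = g.1 * y * g.1⁻¹ := by rw [h1]
        _ = x := by rw [hydef]; group
    calc (g.1 * σ y hy) * x = ((g.1 * σ y hy) * x * (g.1 * σ y hy)⁻¹) * (g.1 * σ y hy) := by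
          group
      _ = x * (g.1 * σ y hy) := by rw [this]
  · rintro ⟨⟨y, hy, hPy⟩, ⟨z, hz⟩⟩
    have h1 : z⁻¹ * x * z = x := by rw [mul_assoc, ← hz]; group
    have key : (z * (σ y hy)⁻¹)⁻¹ * x * (z * (σ y hy)⁻¹) = y := by
      calc (z * (σ y hy)⁻¹)⁻¹ * x * (z * (σ y hy)⁻¹)
          = σ y hy * (z⁻¹ * x * z) * (σ y hy)⁻¹ := by group
        _ = σ y hy * x * (σ y hy)⁻¹ := by rw [h1]
        _ = y := hσ y hy
    have hσeq : ∀ (y' : G) (hy' : IsConj x y') (h : y' = y), σ y' hy' = σ y hy := by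
      rintro y' hy' rfl; rfl
    refine Prod.ext (Subtype.ext ?_) (Subtype.ext ?_) <;> dsimp only
    · exact key
    · rw [hσeq _ _ key]
      · group
      · exact key.symm ▸ hy
  · rintro ⟨g, hg⟩
    refine Subtype.ext ?_
    dsimp only
    group

end Aux

/-- The number of fixed points of `x` on `G/H` equals `|G·x ∩ H| · [G : H] / |G·x|`,
stated multiplied through by the size `|G·x|` of the conjugacy class of `x`. -/
theorem stmt_4 {G : Type*} [Group G] [Finite G] (H : Subgroup G) (x : G) :
    Nat.card {c : G ⧸ H // x • c = c} * Nat.card {y : G // IsConj x y}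
      = Nat.card {y : G // IsConj x y ∧ y ∈ H} * H.index := by
  classical
  set a := Nat.card {c : G ⧸ H // x • c = c}
  set b := Nat.card {y : G // IsConj x y}
  set k := Nat.card {y : G // IsConj x y ∧ y ∈ H}
  set cC := Nat.card {z : G // z * x = x * z}
  set cH := Nat.card H
  -- |S| = a * cH = k * cC
  have h1 : a * cH = Nat.card {g : G // g⁻¹ * x * g ∈ H} := by
    rw [← Nat.card_prod]
    exact Nat.card_congr (fixEquiv H x)
  have h2 : k * cC = Nat.card {g : G // g⁻¹ * x * g ∈ H} := by
    rw [← Nat.card_prod]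
    exact Nat.card_congr (conjEquiv x (· ∈ H))
  -- |G| = b * cC
  have h3 : b * cC = Nat.card G := by
    rw [← Nat.card_prod]
    have e1 : {y : G // IsConj x y ∧ (fun _ => True) y} × {z : G // z * x = x * z}
        ≃ {g : G // (fun _ => True) (g⁻¹ * x * g)} := conjEquiv x (fun _ => True)
    have e2 : {y : G // IsConj x y} ≃ {y : G // IsConj x y ∧ True} :=
      Equiv.subtypeEquivRight (by simp)
    have e3 : {g : G // True} ≃ G := Equiv.subtypeUnivEquiv (fun _ => trivial)
    exact Nat.card_congr (((e2.prodCongr (Equiv.refl _)).trans e1).trans e3)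
  have h4 : H.index * cH = Nat.card G := H.index_mul_card
  have hC : 0 < cC := Nat.card_pos_iff.mpr ⟨⟨⟨1, by group⟩⟩, inferInstance⟩
  have hH : 0 < cH := Nat.card_pos
  refine Nat.eq_of_mul_eq_mul_right (Nat.mul_pos hC hH) ?_
  calc a * b * (cC * cH) = (a * cH) * (b * cC) := by ring
    _ = Nat.card {g : G // g⁻¹ * x * g ∈ H} * Nat.card G := by rw [h1, h3]
    _ = (k * cC) * (H.index * cH) := by rw [h2, h4]
    _ = k * H.index * (cC * cH) := by ring
end

section
/- Fix a dimension vector d = (d₁, …, d_r) with d₁ < d₂ < … < d_r = n and a vector e = (e₁, …, e_r) of non-negative integers with e_i ≤ d_i and e_i ≤ e_{i+1}. For an n-dimensional F_q-vector space V and a flag {0} = V₀ ⊆ V₁ ⊆ … ⊆ V_r = V with dim V_i = d_i, the number of subspaces U ≤ V with dim(U ∩ V_i) = e_i for all i depends only on d and e (not on q-independent choices of V and the flag), and as a function of q it is given by a polynomial in q with rational coefficients. -/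
open Polynomial Module Submodule Finset

lemma seq_count {α : Type*} [Fintype α] [Nonempty α] (k : ℕ)
    (T : Fin k → (Fin k → α) → Set α) (c : Fin k → ℕ)
    (hdep : ∀ (m : Fin k) (v w : Fin k → α), (∀ j : Fin k, j < m → v j = w j) → T m v = T m w)
    (hc : ∀ (m : Fin k) (v : Fin k → α), (∀ j : Fin k, j < m → v j ∈ T j v) →
      Nat.card (T m v) = c m) :
    Nat.card {v : Fin k → α // ∀ m, v m ∈ T m v} = ∏ m, c m := by
  classical
  obtain ⟨a₀⟩ := ‹Nonempty α›
  set P : ℕ → (Fin k → α) → Prop := fun s v =>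
    (∀ m : Fin k, (m : ℕ) < s → v m ∈ T m v) ∧ ∀ m : Fin k, s ≤ (m : ℕ) → v m = a₀ with hP
  have hstep : ∀ s, ∀ hsk : s < k,
      (univ.filter (P (s+1))).card = (univ.filter (P s)).card * c ⟨s, hsk⟩ := by
    intro s hsk
    set m₀ : Fin k := ⟨s, hsk⟩ with hm₀
    have hm₀v : (m₀ : ℕ) = s := rfl
    have hagree : ∀ v : Fin k → α, ∀ j : Fin k, j < m₀ → Function.update v m₀ a₀ j = v j := by
      intro v j hj
      exact Function.update_of_ne (by intro h; subst h; exact lt_irrefl _ hj) _ _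
    have hmap : ∀ v ∈ univ.filter (P (s+1)), Function.update v m₀ a₀ ∈ univ.filter (P s) := by
      intro v hv
      rw [mem_filter] at hv ⊢
      obtain ⟨-, h1, h2⟩ := hv
      refine ⟨mem_univ _, fun m hm => ?_, fun m hm => ?_⟩
      · have hne : m ≠ m₀ := by
          intro h; subst h; exact absurd hm (by omega)
        rw [Function.update_of_ne hne,
          hdep m (Function.update v m₀ a₀) v (fun j hj => hagree v j
            (lt_trans hj (Fin.lt_def.mpr (by omega))))]
        exact h1 m (Nat.lt_succ_of_lt hm)
      · rcases eq_or_ne m m₀ with h | h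
        · rw [h, Function.update_self]
        · rw [Function.update_of_ne h]
          refine h2 m ?_
          rcases Nat.lt_or_ge (m : ℕ) (s+1) with h' | h'
          · exact absurd (Fin.ext (by omega) : m = m₀) h
          · exact h'
    rw [Finset.card_eq_sum_card_fiberwise hmap]
    have hfib : ∀ w ∈ univ.filter (P s),
        ((univ.filter (P (s+1))).filter (fun v => Function.update v m₀ a₀ = w)).card = c m₀ := by
      intro w hw
      rw [mem_filter] at hw
      obtain ⟨-, hw1, hw2⟩ := hw
      have hwm₀ : w m₀ = a₀ := hw2 m₀ (le_refl s)
      have himg : (univ.filter (P (s+1))).filter (fun v => Function.update v m₀ a₀ = w)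
          = (T m₀ w).toFinset.image (fun x => Function.update w m₀ x) := by
        ext v
        simp only [mem_filter, mem_univ, true_and, Finset.mem_image, Set.mem_toFinset]
        constructor
        · rintro ⟨⟨h1, h2⟩, hvw⟩
          have hoff : ∀ j : Fin k, j ≠ m₀ → w j = v j := by
            intro j hj
            rw [← hvw, Function.update_of_ne hj]
          refine ⟨v m₀, ?_, ?_⟩
          · rw [hdep m₀ w v (fun j hj => hoff j
              (by intro h; subst h; exact lt_irrefl _ hj))]
            exact h1 m₀ (Nat.lt_succ_self s)
          · funext j
            rcases eq_or_ne j m₀ with h | h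
            · rw [h, Function.update_self]
            · rw [Function.update_of_ne h]; exact hoff j h
        · rintro ⟨x, hx, rfl⟩
          have hagw : ∀ j : Fin k, j < m₀ → Function.update w m₀ x j = w j := by
            intro j hj
            exact Function.update_of_ne (by intro h; subst h; exact lt_irrefl _ hj) _ _
          refine ⟨⟨fun m hm => ?_, fun m hm => ?_⟩, ?_⟩
          · rcases eq_or_ne m m₀ with h | h
            · subst h
              rw [Function.update_self, hdep m₀ (Function.update w m₀ x) w hagw]
              exact hx
            · have hmlt : (m : ℕ) < s := by
                rcases Nat.lt_or_ge (m : ℕ) s with h' | h'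
                · exact h'
                · exact absurd (Fin.ext (by omega) : m = m₀) h
              rw [Function.update_of_ne h,
                hdep m (Function.update w m₀ x) w (fun j hj => hagw j
                  (lt_trans hj (Fin.lt_def.mpr (by omega))))]
              exact hw1 m hmlt
          · have h : m ≠ m₀ := by intro hh; subst hh; omega
            rw [Function.update_of_ne h]
            exact hw2 m (by omega)
          · funext j
            rcases eq_or_ne j m₀ with h | h
            · rw [h, Function.update_self, hwm₀]
            · rw [Function.update_of_ne h, Function.update_of_ne h]
      rw [himg, Finset.card_image_of_injective _
        (fun x y hxy => by simpa using congrFun hxy m₀),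
        Set.toFinset_card, ← Nat.card_eq_fintype_card]
      exact hc m₀ w (fun j hj => hw1 j hj)
    rw [Finset.sum_congr rfl hfib, Finset.sum_const, smul_eq_mul]
  have key : ∀ s, s ≤ k → (univ.filter (P s)).card
      = ∏ m ∈ univ.filter (fun m : Fin k => (m : ℕ) < s), c m := by
    intro s
    induction s with
    | zero =>
      intro _
      rw [Finset.prod_eq_one (by simp)]
      have : univ.filter (P 0) = {fun _ => a₀} := by
        ext v
        simp only [mem_filter, mem_univ, true_and, Finset.mem_singleton]
        constructor
        · rintro ⟨-, h2⟩; funext m; exact h2 m (Nat.zero_le _)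
        · rintro rfl; exact ⟨fun m hm => absurd hm (Nat.not_lt_zero _), fun _ _ => rfl⟩
      rw [this, Finset.card_singleton]
    | succ s ih =>
      intro hs
      have hsk : s < k := hs
      rw [hstep s hsk, ih (le_of_lt hsk)]
      have : univ.filter (fun m : Fin k => (m : ℕ) < s + 1)
          = insert ⟨s, hsk⟩ (univ.filter (fun m : Fin k => (m : ℕ) < s)) := by
        ext m
        simp only [mem_filter, mem_univ, true_and, Finset.mem_insert, Fin.ext_iff]
        omega
      rw [this, Finset.prod_insert (by simp), mul_comm]
  have hfin : univ.filter (P k) = univ.filter (fun v : Fin k → α => ∀ m, v m ∈ T m v) := by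
    ext v
    simp only [mem_filter, mem_univ, true_and]
    constructor
    · rintro ⟨h1, -⟩
      exact fun m => h1 m m.isLt
    · intro h
      exact ⟨fun m _ => h m, fun m hm => absurd hm (by omega)⟩
  have : univ.filter (fun m : Fin k => (m : ℕ) < k) = univ := by
    ext m; simp [m.isLt]
  rw [Nat.card_eq_fintype_card, Fintype.card_subtype, ← hfin, key k (le_refl k), this]

section Blk

/-- The block of position `j`: least `i` with `j < e i`. -/
noncomputable def blk (e : ℕ → ℕ) (j : ℕ) : ℕ := sInf {i | j < e i}

variable {e : ℕ → ℕ} {j : ℕ}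

lemma blk_lt (h : ∃ i, j < e i) : j < e (blk e j) := Nat.sInf_mem h

lemma blk_pos (he0 : e 0 = 0) (h : ∃ i, j < e i) : 0 < blk e j := by
  rcases Nat.eq_zero_or_pos (blk e j) with h0 | h1
  · exfalso
    have := blk_lt h
    rw [h0, he0] at this
    omega
  · exact h1

lemma blk_pred_le (he0 : e 0 = 0) (h : ∃ i, j < e i) : e (blk e j - 1) ≤ j := by
  by_contra hc
  push_neg at hc
  have := Nat.sInf_le (show blk e j - 1 ∈ {i | j < e i} from hc)
  have := blk_pos he0 h
  unfold blk at *
  omega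

lemma blk_mono {j' : ℕ} (hj : j ≤ j') (h : ∃ i, j' < e i) : blk e j ≤ blk e j' :=
  Nat.sInf_le (show blk e j' ∈ {i | j < e i} from lt_of_le_of_lt hj (blk_lt h))

lemma blk_le (hemono : Monotone e) {i : ℕ} (hi : j < e i) : blk e j ≤ i := Nat.sInf_le hi

end Blk

section Flag

variable {F : Type*} [Field F] {V : Type*} [AddCommGroup V] [Module F V]
  [FiniteDimensional F V]

/-- Span of the first `m` vectors of the tuple `v`. -/
def pre (F : Type*) [Field F] {V : Type*} [AddCommGroup V] [Module F V]
    {k : ℕ} (v : Fin k → V) (m : ℕ) : Submodule F V :=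
  span F (v '' {j : Fin k | (j : ℕ) < m})

lemma pre_mono {k : ℕ} (v : Fin k → V) {m m' : ℕ} (h : m ≤ m') : pre F v m ≤ pre F v m' :=
  span_mono (Set.image_mono (fun j hj => lt_of_lt_of_le hj h))

lemma pre_succ {k : ℕ} (v : Fin k → V) {m : ℕ} (hm : m < k) :
    pre F v (m + 1) = pre F v m ⊔ span F {v ⟨m, hm⟩} := by
  have hset : {j : Fin k | (j : ℕ) < m + 1} = {j : Fin k | (j : ℕ) < m} ∪ {⟨m, hm⟩} := by
    ext j
    simp only [Set.mem_setOf_eq, Set.mem_union, Set.mem_singleton_iff, Fin.ext_iff]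
    omega
  rw [pre, pre, hset, Set.image_union, Set.image_singleton, span_union]

lemma pre_le {k : ℕ} (v : Fin k → V) {m : ℕ} (W : Submodule F V)
    (h : ∀ j : Fin k, (j : ℕ) < m → v j ∈ W) : pre F v m ≤ W := by
  rw [pre, span_le]
  rintro x ⟨j, hj, rfl⟩
  exact h j hj

lemma finrank_sup_span_singleton (P : Submodule F V) (x : V) (hx : x ∉ P) :
    finrank F ↥(P ⊔ span F {x}) = finrank F P + 1 := by
  have hinf : P ⊓ span F {x} = ⊥ := by
    rw [eq_bot_iff]
    intro y hy
    rw [Submodule.mem_inf] at hy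
    obtain ⟨hyP, hyx⟩ := hy
    rw [mem_span_singleton] at hyx
    obtain ⟨a, rfl⟩ := hyx
    rcases eq_or_ne a 0 with rfl | ha
    · simp
    · have h2 := P.smul_mem a⁻¹ hyP
      rw [smul_smul, inv_mul_cancel₀ ha, one_smul] at h2
      exact absurd h2 hx
  have hx0 : x ≠ 0 := fun h => hx (h ▸ P.zero_mem)
  have := Submodule.finrank_sup_add_finrank_inf_eq P (span F {x})
  rw [hinf, finrank_bot, finrank_span_singleton hx0] at this
  omega

end Flag

section Semantic

variable {F : Type*} [Field F] {V : Type*} [AddCommGroup V] [Module F V]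
  [FiniteDimensional F V]

lemma pre_spec (Wf : ℕ → Submodule F V) (hWmono : Monotone Wf) (hW0 : Wf 0 = ⊥)
    (e : ℕ → ℕ) (hemono : Monotone e) (he0 : e 0 = 0)
    {k r : ℕ} (hekr : e r = k) (v : Fin k → V) :
    ∀ m, m ≤ k →
    (∀ j : Fin k, (j : ℕ) < m →
      v j ∈ Wf (blk e (j : ℕ)) ∧ v j ∉ Wf (blk e (j : ℕ) - 1) ⊔ pre F v (j : ℕ)) →
    finrank F (pre F v m) = m ∧ ∀ i, Wf i ⊓ pre F v m = pre F v (min m (e i)) := by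
  intro m
  induction m with
  | zero =>
    intro _ _
    have hempty : pre F v 0 = ⊥ := by
      rw [pre]
      have : {j : Fin k | (j : ℕ) < 0} = ∅ := by ext j; simp
      rw [this, Set.image_empty, span_empty]
    constructor
    · rw [hempty, finrank_bot]
    · intro i
      simp [hempty]
  | succ m ih =>
    intro hm1 hv
    have hmk : m < k := hm1
    set j₀ : Fin k := ⟨m, hmk⟩ with hj₀
    have hex : ∃ i, m < e i := ⟨r, hekr ▸ hmk⟩
    set i₀ : ℕ := blk e m with hi₀
    obtain ⟨hmem, hnmem⟩ := hv j₀ (Nat.lt_succ_self m)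
    obtain ⟨ihdim, ihinf⟩ := ih (le_of_lt hm1) (fun j hj => hv j (Nat.lt_succ_of_lt hj))
    have hprele : pre F v m ≤ Wf i₀ := by
      refine pre_le v _ (fun j hj => ?_)
      have hble : blk e (j : ℕ) ≤ i₀ := blk_mono (le_of_lt hj) hex
      exact hWmono hble (hv j (Nat.lt_succ_of_lt hj)).1
    have hnotpre : v j₀ ∉ pre F v m := fun h =>
      hnmem (Submodule.mem_sup_right h)
    have hsucc := pre_succ (F := F) v hmk
    constructor
    · rw [hsucc, finrank_sup_span_singleton _ _ hnotpre, ihdim]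
    · intro i
      rcases le_or_gt i₀ i with hii | hii
      · -- big i : everything is inside Wf i
        have hmei : m < e i := lt_of_lt_of_le (blk_lt hex) (hemono hii)
        have hmin : min (m+1) (e i) = m + 1 := by omega
        rw [hmin, hsucc, inf_eq_right.mpr]
        rw [sup_le_iff]
        constructor
        · exact hprele.trans (hWmono hii)
        · rw [span_le, Set.singleton_subset_iff]
          exact hWmono hii hmem
      · -- small i
        have hie : e i ≤ m := le_trans (hemono (by omega : i ≤ i₀ - 1)) (blk_pred_le he0 hex)
        have hmin : min (m+1) (e i) = min m (e i) := by omega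
        rw [hmin, ← ihinf i, hsucc]
        apply le_antisymm
        · intro u hu
          rw [Submodule.mem_inf] at hu
          obtain ⟨huW, husup⟩ := hu
          rw [Submodule.mem_sup] at husup
          obtain ⟨s, hs, y, hy, rfl⟩ := husup
          rw [mem_span_singleton] at hy
          obtain ⟨a, rfl⟩ := hy
          rcases eq_or_ne a 0 with rfl | ha
          · rw [zero_smul, add_zero] at huW ⊢
            exact Submodule.mem_inf.mpr ⟨huW, hs⟩
          · exfalso
            apply hnmem
            have h1 : s + a • v j₀ ∈ Wf (i₀ - 1) ⊔ pre F v m :=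
              Submodule.mem_sup_left (hWmono (by omega : i ≤ i₀ - 1) huW)
            have h2 : s ∈ Wf (i₀ - 1) ⊔ pre F v m := Submodule.mem_sup_right hs
            have h3 : a • v j₀ ∈ Wf (i₀ - 1) ⊔ pre F v m := by
              have := Submodule.sub_mem _ h1 h2
              simpa using this
            have := Submodule.smul_mem _ a⁻¹ h3
            rwa [smul_smul, inv_mul_cancel₀ ha, one_smul] at this
        · exact le_inf (inf_le_left) (le_trans inf_le_right le_sup_left)

end Semantic

section Count

variable {F : Type*} [Field F] [Fintype F] {V : Type*} [AddCommGroup V] [Module F V]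
  [FiniteDimensional F V]

lemma card_mem_notmem (A B : Submodule F V) (hBA : B ≤ A) :
    Nat.card {x : V // x ∈ A ∧ x ∉ B}
      = Fintype.card F ^ finrank F A - Fintype.card F ^ finrank F B := by
  haveI : Finite V := Module.finite_of_finite F
  have hset : {x : V | x ∈ A ∧ x ∉ B} = (A : Set V) \ (B : Set V) := rfl
  have h1 : Nat.card {x : V // x ∈ A ∧ x ∉ B} = ((A : Set V) \ (B : Set V)).ncard := by
    rw [← Nat.card_coe_set_eq, ← hset]
    rfl
  have hsub : (B : Set V) ⊆ (A : Set V) := hBA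
  rw [h1, Set.ncard_diff hsub (Set.toFinite _)]
  have hA : (A : Set V).ncard = Fintype.card F ^ finrank F A := by
    rw [← Nat.card_coe_set_eq]
    haveI : Fintype ↥A := Fintype.ofFinite _
    rw [Nat.card_eq_fintype_card]
    exact card_eq_pow_finrank
  have hB : (B : Set V).ncard = Fintype.card F ^ finrank F B := by
    rw [← Nat.card_coe_set_eq]
    haveI : Fintype ↥B := Fintype.ofFinite _
    rw [Nat.card_eq_fintype_card]
    exact card_eq_pow_finrank
  rw [hA, hB]

/-- Validity of a tuple with respect to a flag. -/
def TupValid {F : Type*} [Field F] {V : Type*} [AddCommGroup V] [Module F V]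
    (Wf : ℕ → Submodule F V) (e : ℕ → ℕ) {k : ℕ} (v : Fin k → V) : Prop :=
  ∀ j : Fin k, v j ∈ Wf (blk e (j : ℕ)) ∧ v j ∉ Wf (blk e (j : ℕ) - 1) ⊔ pre F v (j : ℕ)

/-- The number of "flag-adapted tuples". -/
theorem tuple_count (Wf : ℕ → Submodule F V) (hWmono : Monotone Wf) (hW0 : Wf 0 = ⊥)
    (e : ℕ → ℕ) (hemono : Monotone e) (he0 : e 0 = 0) {k r : ℕ} (hekr : e r = k) :
    Nat.card {v : Fin k → V // TupValid Wf e v}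
      = ∏ j : Fin k, (Fintype.card F ^ finrank F (Wf (blk e (j : ℕ)))
          - Fintype.card F ^ (finrank F (Wf (blk e (j : ℕ) - 1)) + ((j : ℕ) - e (blk e (j : ℕ) - 1)))) := by
  haveI : Finite V := Module.finite_of_finite F
  haveI : Fintype V := Fintype.ofFinite _
  have hcount := seq_count (α := V) k
    (fun j v => {x : V | x ∈ Wf (blk e (j : ℕ)) ∧ x ∉ Wf (blk e (j : ℕ) - 1) ⊔ pre F v (j : ℕ)})
    (fun j => Fintype.card F ^ finrank F (Wf (blk e (j : ℕ)))
      - Fintype.card F ^ (finrank F (Wf (blk e (j : ℕ) - 1)) + ((j : ℕ) - e (blk e (j : ℕ) - 1))))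
    ?_ ?_
  · exact hcount
  · -- dependence only on earlier coordinates
    intro m v w hvw
    have : pre F v (m : ℕ) = pre F w (m : ℕ) := by
      rw [pre, pre]
      congr 1
      apply Set.image_congr
      intro j hj
      exact hvw j (Fin.lt_def.mpr hj)
    ext x
    simp only [Set.mem_setOf_eq, this]
  · -- cardinality of each fiber
    intro m v hval
    have hex : ∃ i, (m : ℕ) < e i := ⟨r, hekr ▸ m.isLt⟩
    set i₀ : ℕ := blk e (m : ℕ) with hi₀
    have hval' : ∀ j : Fin k, (j : ℕ) < (m : ℕ) →
        v j ∈ Wf (blk e (j : ℕ)) ∧ v j ∉ Wf (blk e (j : ℕ) - 1) ⊔ pre F v (j : ℕ) := by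
      intro j hj
      exact hval j (Fin.lt_def.mpr hj)
    obtain ⟨hdim, hinf⟩ := pre_spec Wf hWmono hW0 e hemono he0 hekr v (m : ℕ)
      (le_of_lt m.isLt) hval'
    have hpe : e (i₀ - 1) ≤ (m : ℕ) := blk_pred_le he0 hex
    obtain ⟨hdim', -⟩ := pre_spec Wf hWmono hW0 e hemono he0 hekr v (e (i₀ - 1))
      (le_trans hpe (le_of_lt m.isLt)) (fun j hj => hval' j (lt_of_lt_of_le hj hpe))
    have hprele : pre F v (m : ℕ) ≤ Wf i₀ := by
      refine pre_le v _ (fun j hj => ?_)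
      have hble : blk e (j : ℕ) ≤ i₀ := blk_mono (le_of_lt hj) hex
      exact hWmono hble (hval' j hj).1
    have hBA : Wf (i₀ - 1) ⊔ pre F v (m : ℕ) ≤ Wf i₀ :=
      sup_le (hWmono (Nat.sub_le _ _)) hprele
    rw [show Nat.card {x : V | x ∈ Wf i₀ ∧ x ∉ Wf (i₀ - 1) ⊔ pre F v (m : ℕ)}
      = Nat.card {x : V // x ∈ Wf i₀ ∧ x ∉ Wf (i₀ - 1) ⊔ pre F v (m : ℕ)} from rfl,
      card_mem_notmem _ _ hBA]
    have h1 := Submodule.finrank_sup_add_finrank_inf_eq (Wf (i₀ - 1)) (pre F v (m : ℕ))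
    rw [hinf (i₀ - 1), min_eq_right hpe, hdim', hdim] at h1
    have h2 : finrank F ↥(Wf (i₀ - 1) ⊔ pre F v (m : ℕ))
        = finrank F (Wf (i₀ - 1)) + ((m : ℕ) - e (i₀ - 1)) := by omega
    rw [h2]

end Count

section Fiber

variable {F : Type*} [Field F] [Fintype F] {V : Type*} [AddCommGroup V] [Module F V]
  [FiniteDimensional F V]

lemma pre_range {k : ℕ} (v : Fin k → V) : pre F v k = span F (Set.range v) := by
  rw [pre]
  congr 1
  rw [show {j : Fin k | (j : ℕ) < k} = Set.univ from by ext j; simp [j.isLt], Set.image_univ]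

lemma mem_map_subtype_iff (U : Submodule F V) (P : Submodule F ↥U) (x : ↥U) :
    (x : V) ∈ map U.subtype P ↔ x ∈ P := by
  constructor
  · rintro ⟨y, hy, hxy⟩
    rwa [show y = x from Subtype.coe_injective hxy] at hy
  · intro h; exact mem_map_of_mem h

lemma fiber_count (Wf : ℕ → Submodule F V) (hWmono : Monotone Wf) (hW0 : Wf 0 = ⊥)
    (e : ℕ → ℕ) (hemono : Monotone e) (he0 : e 0 = 0) {k r : ℕ} (hekr : e r = k)
    (hek : ∀ i, e i ≤ k) (hWtop : Wf r = ⊤)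
    (U : Submodule F V) (hU : ∀ i, finrank F ↥(U ⊓ Wf i) = e i) :
    Nat.card {v : Fin k → V // TupValid Wf e v ∧ span F (Set.range v) = U}
      = ∏ j : Fin k, (Fintype.card F ^ e (blk e (j : ℕ)) - Fintype.card F ^ (j : ℕ)) := by
  classical
  set Wf' : ℕ → Submodule F ↥U := fun i => comap U.subtype (Wf i) with hWf'
  have hdim' : ∀ i, finrank F ↥(Wf' i) = e i := by
    intro i
    have h1 : Wf' i = comap U.subtype (U ⊓ Wf i) := by
      rw [hWf', Submodule.comap_inf, Submodule.comap_subtype_self, top_inf_eq]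
    rw [h1, (Submodule.comapSubtypeEquivOfLe (inf_le_left : U ⊓ Wf i ≤ U)).finrank_eq]
    exact hU i
  have hW'mono : Monotone Wf' := fun i j hij => Submodule.comap_mono (hWmono hij)
  have hW'0 : Wf' 0 = ⊥ := by
    show comap U.subtype (Wf 0) = ⊥
    rw [hW0, Submodule.comap_bot, Submodule.ker_subtype]
  have hUrank : finrank F ↥U = k := by
    have := hU r
    rwa [hWtop, inf_top_eq, hekr] at this
  -- the key bijection
  have hbij : ∃ f : {w : Fin k → ↥U // TupValid Wf' e w} →
      {v : Fin k → V // TupValid Wf e v ∧ span F (Set.range v) = U}, Function.Bijective f := by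
    -- coercion of pre
    have hpre : ∀ (w : Fin k → ↥U) (m : ℕ),
        pre F (fun j => (w j : V)) m = map U.subtype (pre F w m) := by
      intro w m
      rw [pre, pre, Submodule.map_span, ← Set.image_comp]
      rfl
    have hprele : ∀ (w : Fin k → ↥U) (m : ℕ), pre F (fun j => (w j : V)) m ≤ U := by
      intro w m
      exact pre_le _ _ (fun j _ => (w j).2)
    -- transfer of the sup-membership condition
    have hsup : ∀ (w : Fin k → ↥U) (j : Fin k),
        ((w j : V) ∈ Wf (blk e (j : ℕ) - 1) ⊔ pre F (fun j' => (w j' : V)) (j : ℕ))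
        ↔ w j ∈ Wf' (blk e (j : ℕ) - 1) ⊔ pre F w (j : ℕ) := by
      intro w j
      rw [← mem_map_subtype_iff U, Submodule.map_sup, Submodule.map_comap_subtype, ← hpre]
      constructor
      · intro h
        rw [Submodule.mem_sup] at h
        obtain ⟨a, ha, s, hs, has⟩ := h
        have haU : a ∈ U := by
          have hsU : s ∈ U := hprele w (j : ℕ) hs
          have : a = (w j : V) - s := by rw [← has]; abel
          rw [this]
          exact U.sub_mem (w j).2 hsU
        exact Submodule.mem_sup.mpr ⟨a, Submodule.mem_inf.mpr ⟨haU, ha⟩, s, hs, has⟩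
      · intro h
        exact (sup_le_sup_right (inf_le_right : U ⊓ Wf (blk e (j : ℕ) - 1) ≤ _)
          (pre F (fun j' => (w j' : V)) (j : ℕ))) h
    refine ⟨fun w => ⟨fun j => (w.1 j : V), fun j => ⟨?_, ?_⟩, ?_⟩, ?_, ?_⟩
    · exact Submodule.mem_comap.mp (w.2 j).1
    · exact fun h => (w.2 j).2 ((hsup w.1 j).mp h)
    · have h1 : pre F w.1 k = ⊤ := by
        have h2 := (pre_spec Wf' hW'mono hW'0 e hemono he0 hekr w.1 k (le_refl k)
          (fun j _ => w.2 j)).1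
        exact eq_top_of_finrank_eq (by rw [h2, hUrank])
      calc span F (Set.range fun j => (w.1 j : V))
          = pre F (fun j => (w.1 j : V)) k := (pre_range _).symm
        _ = map U.subtype (pre F w.1 k) := hpre w.1 k
        _ = U := by rw [h1]; exact Submodule.map_subtype_top U
    · intro w1 w2 h
      apply Subtype.ext
      funext j
      apply Subtype.ext
      exact congrFun (congrArg Subtype.val h) j
    · rintro ⟨v, hval, hspan⟩
      have hvU : ∀ j, v j ∈ U := fun j => hspan ▸ subset_span ⟨j, rfl⟩
      refine ⟨⟨fun j => ⟨v j, hvU j⟩, fun j => ⟨?_, ?_⟩⟩, ?_⟩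
      · exact Submodule.mem_comap.mpr (hval j).1
      · intro h
        exact (hval j).2 ((hsup (fun j' => ⟨v j', hvU j'⟩) j).mpr h)
      · exact Subtype.ext rfl
  obtain ⟨f, hf⟩ := hbij
  rw [← Nat.card_eq_of_bijective f hf]
  rw [tuple_count Wf' hW'mono hW'0 e hemono he0 hekr]
  apply Finset.prod_congr rfl
  intro j _
  have hex : ∃ i, (j : ℕ) < e i := ⟨r, hekr ▸ j.isLt⟩
  have hpe : e (blk e (j : ℕ) - 1) ≤ (j : ℕ) := blk_pred_le he0 hex
  rw [hdim', hdim']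
  congr 2
  omega

end Fiber

section FlagCount

variable {F : Type*} [Field F] [Fintype F] {V : Type*} [AddCommGroup V] [Module F V]
  [FiniteDimensional F V]

lemma nat_card_sigma {ι : Type*} [Fintype ι] (f : ι → Type*) [∀ i, Finite (f i)] :
    Nat.card (Σ i, f i) = ∑ i, Nat.card (f i) := by
  classical
  haveI := fun i => Fintype.ofFinite (f i)
  simp [Nat.card_eq_fintype_card, Fintype.card_sigma]

theorem flag_count (Wf : ℕ → Submodule F V) (hWmono : Monotone Wf) (hW0 : Wf 0 = ⊥)
    (e : ℕ → ℕ) (hemono : Monotone e) (he0 : e 0 = 0) {k r : ℕ} (hekr : e r = k)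
    (hek : ∀ i, e i ≤ k) (hWtop : Wf r = ⊤) :
    Nat.card {U : Submodule F V // ∀ i, finrank F ↥(U ⊓ Wf i) = e i}
      * ∏ j : Fin k, (Fintype.card F ^ e (blk e (j : ℕ)) - Fintype.card F ^ (j : ℕ))
    = ∏ j : Fin k, (Fintype.card F ^ finrank F (Wf (blk e (j : ℕ)))
        - Fintype.card F ^ (finrank F (Wf (blk e (j : ℕ) - 1))
            + ((j : ℕ) - e (blk e (j : ℕ) - 1)))) := by
  classical
  haveI : Finite V := Module.finite_of_finite F
  haveI : Finite (Submodule F V) :=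
    Finite.of_injective (fun U : Submodule F V => (U : Set V)) SetLike.coe_injective
  haveI : Fintype {U : Submodule F V // ∀ i, finrank F ↥(U ⊓ Wf i) = e i} := Fintype.ofFinite _
  rw [← tuple_count Wf hWmono hW0 e hemono he0 hekr]
  -- the classifying map
  have hg : ∀ v : {v : Fin k → V // TupValid Wf e v},
      ∀ i, finrank F ↥(span F (Set.range v.1) ⊓ Wf i) = e i := by
    intro v i
    obtain ⟨hdim, hinf⟩ := pre_spec Wf hWmono hW0 e hemono he0 hekr v.1 k (le_refl k)
      (fun j _ => v.2 j)
    obtain ⟨hdim2, -⟩ := pre_spec Wf hWmono hW0 e hemono he0 hekr v.1 (e i) (hek i)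
      (fun j _ => v.2 j)
    rw [inf_comm, ← pre_range v.1, hinf i, min_eq_right (hek i), hdim2]
  set g : {v : Fin k → V // TupValid Wf e v} →
      {U : Submodule F V // ∀ i, finrank F ↥(U ⊓ Wf i) = e i} :=
    fun v => ⟨span F (Set.range v.1), hg v⟩ with hgdef
  have h1 : Nat.card {v : Fin k → V // TupValid Wf e v}
      = ∑ U : {U : Submodule F V // ∀ i, finrank F ↥(U ⊓ Wf i) = e i},
          Nat.card {v : {v : Fin k → V // TupValid Wf e v} // g v = U} := by
    rw [Nat.card_congr (Equiv.sigmaFiberEquiv g).symm, nat_card_sigma]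
  have h2 : ∀ U : {U : Submodule F V // ∀ i, finrank F ↥(U ⊓ Wf i) = e i},
      Nat.card {v : {v : Fin k → V // TupValid Wf e v} // g v = U}
        = ∏ j : Fin k, (Fintype.card F ^ e (blk e (j : ℕ)) - Fintype.card F ^ (j : ℕ)) := by
    intro U
    rw [← fiber_count Wf hWmono hW0 e hemono he0 hekr hek hWtop U.1 U.2]
    apply Nat.card_eq_of_bijective
      (f := fun v => ⟨v.1.1, v.1.2, congrArg Subtype.val v.2⟩)
    constructor
    · rintro ⟨⟨v1, h1⟩, h2⟩ ⟨⟨v2, h3⟩, h4⟩ h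
      simp only [Subtype.mk.injEq] at h ⊢
      exact h
    · rintro ⟨v, hval, hspan⟩
      exact ⟨⟨⟨v, hval⟩, Subtype.ext hspan⟩, rfl⟩
  rw [h1, Finset.sum_congr rfl (fun U _ => h2 U), Finset.sum_const, Finset.card_univ,
    smul_eq_mul, Nat.card_eq_fintype_card]

section Poly

open Filter Topology

/-- Common denominator for evaluations of a rational polynomial at naturals. -/
lemma exists_denom (t : Polynomial ℚ) :
    ∃ N : ℕ, 0 < N ∧ ∀ m : ℕ, ∃ z : ℤ, (N : ℚ) * t.eval (m : ℚ) = z := by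
  induction t using Polynomial.induction_on' with
  | add p q hp hq =>
    obtain ⟨N1, hN1, h1⟩ := hp
    obtain ⟨N2, hN2, h2⟩ := hq
    refine ⟨N1 * N2, Nat.mul_pos hN1 hN2, fun m => ?_⟩
    obtain ⟨z1, hz1⟩ := h1 m
    obtain ⟨z2, hz2⟩ := h2 m
    refine ⟨N2 * z1 + N1 * z2, ?_⟩
    rw [Polynomial.eval_add, mul_add]
    push_cast
    rw [← hz1, ← hz2]
    ring
  | monomial n a =>
    refine ⟨a.den, a.pos, fun m => ?_⟩
    refine ⟨a.num * m ^ n, ?_⟩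
    rw [Polynomial.eval_monomial]
    push_cast
    rw [← mul_assoc]
    congr 1
    rw [mul_comm, Rat.mul_den_eq_num]

/-- If a polynomial vanishes at all sufficiently large primes, it is zero. -/
lemma eq_zero_of_prime_roots (ρ : Polynomial ℚ) (M : ℕ)
    (h : ∀ p : ℕ, p.Prime → M ≤ p → ρ.eval (p : ℚ) = 0) : ρ = 0 := by
  apply Polynomial.eq_zero_of_infinite_isRoot
  have hinf : {p : ℕ | p.Prime ∧ M ≤ p}.Infinite := by
    have h1 : {p : ℕ | p.Prime} \ {p : ℕ | p < M} ⊆ {p : ℕ | p.Prime ∧ M ≤ p} := by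
      intro p hp
      exact ⟨hp.1, not_lt.mp hp.2⟩
    exact Set.Infinite.mono h1 (Nat.infinite_setOf_prime.diff (Set.finite_lt_nat M))
  have himg : ((fun p : ℕ => (p : ℚ)) '' {p : ℕ | p.Prime ∧ M ≤ p}).Infinite :=
    hinf.image (Set.injOn_of_injective Nat.cast_injective)
  apply himg.mono
  rintro x ⟨p, ⟨hp, hMp⟩, rfl⟩
  exact h p hp hMp

/-- Eventually `|σ(m)| < B(m)` when `deg σ < deg B` and `B` is monic. -/
lemma eventually_abs_lt (σ B : Polynomial ℚ) (hB : B.Monic) (hdeg : σ.degree < B.degree)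
    (hBdeg : 0 < B.degree) :
    ∃ M : ℕ, ∀ m : ℕ, M ≤ m → |σ.eval (m : ℚ)| < B.eval (m : ℚ) := by
  set σ' : Polynomial ℝ := σ.map (algebraMap ℚ ℝ) with hσ'
  set B' : Polynomial ℝ := B.map (algebraMap ℚ ℝ) with hB'
  have hdeg' : σ'.degree < B'.degree := by
    rwa [hσ', hB', Polynomial.degree_map, Polynomial.degree_map]
  have hBdeg' : 0 < B'.degree := by rwa [hB', Polynomial.degree_map]
  have hlead : 0 ≤ B'.leadingCoeff := by
    rw [hB', (hB.map (algebraMap ℚ ℝ)).leadingCoeff]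
    norm_num
  have htop : Tendsto (fun x : ℝ => B'.eval x) atTop atTop :=
    Polynomial.tendsto_atTop_of_leadingCoeff_nonneg B' hBdeg' hlead
  have hz : Tendsto (fun x : ℝ => σ'.eval x / B'.eval x) atTop (𝓝 0) :=
    Polynomial.div_tendsto_zero_of_degree_lt σ' B' hdeg'
  have hev : ∀ᶠ x : ℝ in atTop, |σ'.eval x| < B'.eval x := by
    have h1 : ∀ᶠ x : ℝ in atTop, |σ'.eval x / B'.eval x| < 1 := by
      have habs0 : Tendsto (fun x : ℝ => |σ'.eval x / B'.eval x|) atTop (𝓝 0) := by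
        simpa using hz.abs
      exact habs0.eventually (gt_mem_nhds one_pos)
    have h2 : ∀ᶠ x : ℝ in atTop, 0 < B'.eval x := htop.eventually_gt_atTop 0
    filter_upwards [h1, h2] with x hx1 hx2
    rwa [abs_div, abs_of_pos hx2, div_lt_one hx2] at hx1
  obtain ⟨M0, hM0⟩ := (Filter.eventually_atTop).mp hev
  refine ⟨⌈M0⌉₊, fun m hm => ?_⟩
  have hmM : (m : ℝ) ≥ M0 := le_trans (Nat.le_ceil M0) (by exact_mod_cast hm)
  have := hM0 (m : ℝ) hmM
  have hev1 : σ'.eval ((m : ℕ) : ℝ) = ((σ.eval (m : ℚ) : ℚ) : ℝ) := by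
    rw [hσ', Polynomial.eval_map, show ((m : ℕ) : ℝ) = algebraMap ℚ ℝ (m : ℚ) by push_cast; rfl,
      Polynomial.eval₂_at_apply]
    rfl
  have hev2 : B'.eval ((m : ℕ) : ℝ) = ((B.eval (m : ℚ) : ℚ) : ℝ) := by
    rw [hB', Polynomial.eval_map, show ((m : ℕ) : ℝ) = algebraMap ℚ ℝ (m : ℚ) by push_cast; rfl,
      Polynomial.eval₂_at_apply]
    rfl
  rw [hev1, hev2] at this
  have habs : ((|σ.eval (m : ℚ)| : ℚ) : ℝ) = |((σ.eval (m : ℚ) : ℚ) : ℝ)| := by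
    push_cast; rfl
  have hlt : ((|σ.eval (m : ℚ)| : ℚ) : ℝ) < ((B.eval (m : ℚ) : ℚ) : ℝ) := by
    rw [habs]; exact this
  exact_mod_cast hlt

end Poly

section StdFlag

variable (F : Type*) [Field F]

noncomputable def stdFlag (n m : ℕ) : Submodule F (Fin n → F) :=
  span F ((Pi.basisFun F (Fin n)) '' {i : Fin n | (i : ℕ) < m})

lemma stdFlag_mono (n : ℕ) : Monotone (stdFlag F n) := fun a b h =>
  span_mono (Set.image_mono (fun i hi => lt_of_lt_of_le hi h))

lemma stdFlag_zero (n : ℕ) : stdFlag F n 0 = ⊥ := by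
  rw [stdFlag, show {i : Fin n | (i : ℕ) < 0} = ∅ from by ext; simp, Set.image_empty, span_empty]

lemma stdFlag_top (n m : ℕ) (hm : n ≤ m) : stdFlag F n m = ⊤ := by
  rw [stdFlag, show {i : Fin n | (i : ℕ) < m} = Set.univ from by
    ext i; simpa using lt_of_lt_of_le i.isLt hm, Set.image_univ, Basis.span_eq]

lemma stdFlag_finrank (n m : ℕ) (hm : m ≤ n) : finrank F ↥(stdFlag F n m) = m := by
  have heq : (Pi.basisFun F (Fin n)) '' {i : Fin n | (i : ℕ) < m}
      = Set.range (fun i : {i : Fin n // (i : ℕ) < m} => Pi.basisFun F (Fin n) i.1) := by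
    ext x
    simp only [Set.mem_image, Set.mem_setOf_eq, Set.mem_range, Subtype.exists]
    constructor
    · rintro ⟨i, hi, rfl⟩; exact ⟨i, hi, rfl⟩
    · rintro ⟨i, hi, rfl⟩; exact ⟨i, hi, rfl⟩
  have hli : LinearIndependent F (fun i : {i : Fin n // (i : ℕ) < m} =>
      Pi.basisFun F (Fin n) i.1) :=
    (Pi.basisFun F (Fin n)).linearIndependent.comp Subtype.val Subtype.val_injective
  rw [stdFlag, heq, finrank_span_eq_card hli]
  rw [Fintype.card_congr (⟨fun i => ⟨i.1.1, i.2⟩, fun j => ⟨⟨j.1, lt_of_lt_of_le j.2 hm⟩, j.2⟩,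
    fun i => by ext; rfl, fun j => by ext; rfl⟩ : {i : Fin n // (i : ℕ) < m} ≃ Fin m),
    Fintype.card_fin]

end StdFlag

lemma findim_of_flag {F : Type*} [Field F] {V : Type*} [AddCommGroup V] [Module F V]
    {n r : ℕ} {d : Fin (r + 1) → ℕ} (hd0 : d 0 = 0) (hdmono : StrictMono d)
    (hdn : d (Fin.last r) = n) (hn : Module.finrank F V = n)
    (Vf : Fin (r + 1) → Submodule F V) (hVf0 : Vf 0 = ⊥) (hVftop : Vf (Fin.last r) = ⊤) :
    FiniteDimensional F V := by
  rcases Nat.eq_zero_or_pos n with h0 | hpos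
  · have hr0 : r = 0 := by
      by_contra hr
      have h1 : (0 : Fin (r + 1)) < Fin.last r := by
        rw [Fin.lt_def, Fin.val_last]
        simp only [Fin.val_zero]
        omega
      have h2 := hdmono h1
      rw [hd0, hdn] at h2
      omega
    subst hr0
    have hVtop0 : Vf 0 = ⊤ := by rwa [show Fin.last 0 = 0 from rfl] at hVftop
    have hbt : (⊥ : Submodule F V) = ⊤ := by rw [← hVf0, hVtop0]
    haveI : Subsingleton V := ⟨fun a b => by
      have ha : a ∈ (⊥ : Submodule F V) := by rw [hbt]; trivial
      have hb : b ∈ (⊥ : Submodule F V) := by rw [hbt]; trivial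
      rw [Submodule.mem_bot] at ha hb
      rw [ha, hb]⟩
    infer_instance
  · exact FiniteDimensional.of_finrank_pos (by omega)

/-- For a fixed dimension vector `d` and a vector `e` with `e i ≤ d i` and `e`
non-decreasing, the number of subspaces `U` of an `n`-dimensional `F_q`-vector
space `V` with `dim (U ⊓ V_i) = e i` for a flag `(V_i)` of dimension vector `d`
is given by a polynomial in `q` with rational coefficients, independently of the
finite field, the space and the flag. -/
theorem stmt_7 (n r : ℕ) (d e : Fin (r + 1) → ℕ)
    (hd0 : d 0 = 0) (hdmono : StrictMono d) (hdn : d (Fin.last r) = n)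
    (he0 : e 0 = 0) (hemono : Monotone e) (hed : ∀ i, e i ≤ d i) :
    ∃ t : Polynomial ℚ,
      ∀ (F : Type) [Field F] [Fintype F],
      ∀ (V : Type) [AddCommGroup V] [Module F V], Module.finrank F V = n →
      ∀ Vf : Fin (r + 1) → Submodule F V, Monotone Vf → Vf 0 = ⊥ →
        Vf (Fin.last r) = ⊤ → (∀ i, Module.finrank F (Vf i) = d i) →
        (Nat.card {U : Submodule F V //
            ∀ i, Module.finrank F ↥(U ⊓ Vf i) = e i} : ℚ)
          = t.eval (Fintype.card F : ℚ) := by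
  classical
  set D : ℕ → ℕ := fun i => d ⟨min i r, by omega⟩ with hD
  set E : ℕ → ℕ := fun i => e ⟨min i r, by omega⟩ with hE
  have hDmono : Monotone D := fun a b hab => hdmono.monotone (by simp [Fin.le_def]; omega)
  have hEmono : Monotone E := fun a b hab => hemono (by simp [Fin.le_def]; omega)
  have hD0 : D 0 = 0 := by
    simp only [hD]
    convert hd0 using 2
    exact Fin.ext (by simp)
  have hE0 : E 0 = 0 := by
    simp only [hE]
    convert he0 using 2
    exact Fin.ext (by simp)
  set k : ℕ := E r with hk
  have hEk : ∀ i, E i ≤ k := by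
    intro i
    rw [hk]
    exact hemono (by simp [Fin.le_def])
  by_cases hMC : ∀ i : ℕ, E (i + 1) + D i ≤ D (i + 1) + E i
  · -- main case
    have hex : ∀ j : Fin k, ∃ i, (j : ℕ) < E i := fun j => ⟨r, hk ▸ j.isLt⟩
    have hblt : ∀ j : Fin k, (j : ℕ) < E (blk E (j : ℕ)) := fun j => blk_lt (hex j)
    have hble : ∀ j : Fin k, E (blk E (j : ℕ) - 1) ≤ (j : ℕ) := fun j => blk_pred_le hE0 (hex j)
    have hbpos : ∀ j : Fin k, 0 < blk E (j : ℕ) := fun j => blk_pos hE0 (hex j)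
    have hexp : ∀ j : Fin k,
        D (blk E (j : ℕ) - 1) + ((j : ℕ) - E (blk E (j : ℕ) - 1)) < D (blk E (j : ℕ)) := by
      intro j
      have h1 := hMC (blk E (j : ℕ) - 1)
      rw [Nat.sub_add_cancel (hbpos j)] at h1
      have h2 := hblt j
      have h3 := hble j
      omega
    set A : Polynomial ℚ := ∏ j : Fin k, (Polynomial.X ^ (D (blk E (j : ℕ)))
      - Polynomial.X ^ (D (blk E (j : ℕ) - 1) + ((j : ℕ) - E (blk E (j : ℕ) - 1)))) with hA
    set B : Polynomial ℚ := ∏ j : Fin k,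
      (Polynomial.X ^ (E (blk E (j : ℕ))) - Polynomial.X ^ (j : ℕ)) with hB
    have hBmonic : B.Monic := by
      apply monic_prod_of_monic
      intro j _
      apply Polynomial.monic_X_pow_sub
      rw [Polynomial.degree_X_pow]
      exact_mod_cast hblt j
    have hBpos : ∀ x : ℚ, 1 < x → 0 < B.eval x := by
      intro x hx
      rw [hB, Polynomial.eval_prod]
      apply Finset.prod_pos
      intro j _
      rw [Polynomial.eval_sub, Polynomial.eval_pow, Polynomial.eval_pow, Polynomial.eval_X,
        sub_pos]
      exact pow_lt_pow_right₀ hx (hblt j)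
    have key : ∀ (F : Type) [Field F] [Fintype F], ∀ (V : Type) [AddCommGroup V] [Module F V],
        Module.finrank F V = n → ∀ Vf : Fin (r + 1) → Submodule F V, Monotone Vf → Vf 0 = ⊥ →
        Vf (Fin.last r) = ⊤ → (∀ i, Module.finrank F (Vf i) = d i) →
        (Nat.card {U : Submodule F V // ∀ i, finrank F ↥(U ⊓ Vf i) = e i} : ℚ)
          * B.eval (Fintype.card F : ℚ) = A.eval (Fintype.card F : ℚ) := by
      intro F _ _ V _ _ hn Vf hVfmono hVf0 hVftop hVfd
      haveI : FiniteDimensional F V := findim_of_flag hd0 hdmono hdn hn Vf hVf0 hVftop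
      set Wf : ℕ → Submodule F V := fun i => Vf ⟨min i r, by omega⟩ with hWf
      have hWmono : Monotone Wf := fun a b hab => hVfmono (by simp [Fin.le_def]; omega)
      have hW0 : Wf 0 = ⊥ := by
        simp only [hWf]
        convert hVf0 using 2
        exact Fin.ext (by simp)
      have hWr : Wf r = ⊤ := by
        simp only [hWf]
        convert hVftop using 2
        exact Fin.ext (by simp [Fin.val_last])
      have hWd : ∀ i, finrank F ↥(Wf i) = D i := fun i => hVfd _
      have hiff : ∀ U : Submodule F V,
          (∀ i, finrank F ↥(U ⊓ Vf i) = e i) ↔ (∀ i : ℕ, finrank F ↥(U ⊓ Wf i) = E i) := by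
        intro U
        constructor
        · intro h i
          exact h _
        · intro h i
          have h2 := h (i : ℕ)
          have hfix : (⟨min (i : ℕ) r, by omega⟩ : Fin (r + 1)) = i :=
            Fin.ext (by have := i.isLt; simp; omega)
          rw [← hfix]
          exact h2
      have hcard : Nat.card {U : Submodule F V // ∀ i, finrank F ↥(U ⊓ Vf i) = e i}
          = Nat.card {U : Submodule F V // ∀ i : ℕ, finrank F ↥(U ⊓ Wf i) = E i} :=
        Nat.card_congr (Equiv.subtypeEquivRight hiff)
      have hfc := flag_count Wf hWmono hW0 E hEmono hE0 (hk.symm) hEk hWr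
      have hq0 : 0 < Fintype.card F := Fintype.card_pos
      have hBevalN : B.eval (Fintype.card F : ℚ)
          = ((∏ j : Fin k, (Fintype.card F ^ E (blk E (j : ℕ))
              - Fintype.card F ^ (j : ℕ)) : ℕ) : ℚ) := by
        rw [hB, Polynomial.eval_prod, Nat.cast_prod]
        apply Finset.prod_congr rfl
        intro j _
        rw [Polynomial.eval_sub, Polynomial.eval_pow, Polynomial.eval_pow, Polynomial.eval_X,
          Nat.cast_sub (Nat.pow_le_pow_right hq0 (le_of_lt (hblt j))), Nat.cast_pow, Nat.cast_pow]
      have hAevalN : A.eval (Fintype.card F : ℚ)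
          = ((∏ j : Fin k, (Fintype.card F ^ finrank F ↥(Wf (blk E (j : ℕ)))
              - Fintype.card F ^ (finrank F ↥(Wf (blk E (j : ℕ) - 1))
                + ((j : ℕ) - E (blk E (j : ℕ) - 1)))) : ℕ) : ℚ) := by
        rw [hA, Polynomial.eval_prod, Nat.cast_prod]
        apply Finset.prod_congr rfl
        intro j _
        rw [hWd, hWd, Polynomial.eval_sub, Polynomial.eval_pow, Polynomial.eval_pow,
          Polynomial.eval_X,
          Nat.cast_sub (Nat.pow_le_pow_right hq0 (le_of_lt (hexp j))), Nat.cast_pow, Nat.cast_pow]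
      rw [hcard, hBevalN, hAevalN, ← Nat.cast_mul, hfc]
    -- the polynomial and the remainder argument
    set t : Polynomial ℚ := A /ₘ B with ht
    have hrem : A %ₘ B = 0 := by
      by_cases hBd : 0 < B.degree
      · obtain ⟨N, hN, hdenom⟩ := exists_denom t
        have hdegρ : (A %ₘ B).degree < B.degree := Polynomial.degree_modByMonic_lt A hBmonic
        have hdegσ : ((N : ℚ) • (A %ₘ B)).degree < B.degree :=
          lt_of_le_of_lt (Polynomial.degree_smul_le _ _) hdegρ
        obtain ⟨M, hM⟩ := eventually_abs_lt _ B hBmonic hdegσ hBd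
        apply eq_zero_of_prime_roots _ (max M 2)
        intro p hp hMp
        haveI : Fact p.Prime := ⟨hp⟩
        have hflag := key (ZMod p) (Fin n → ZMod p) (Module.finrank_fin_fun (R := ZMod p))
          (fun i => stdFlag (ZMod p) n (d i))
          (fun a b hab => stdFlag_mono _ n (hdmono.monotone hab))
          (by show stdFlag (ZMod p) n (d 0) = ⊥; rw [hd0, stdFlag_zero])
          (by show stdFlag (ZMod p) n (d (Fin.last r)) = ⊤; rw [hdn];
              exact stdFlag_top _ _ _ le_rfl)
          (fun i => stdFlag_finrank _ n (d i) (hdn ▸ hdmono.monotone (Fin.le_last i)))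
        rw [ZMod.card] at hflag
        set cQ : ℚ := (Nat.card {U : Submodule (ZMod p) (Fin n → ZMod p) //
          ∀ i, finrank (ZMod p) ↥(U ⊓ stdFlag (ZMod p) n (d i)) = e i} : ℚ) with hcQ
        obtain ⟨z, hz⟩ := hdenom p
        have hdiv := Polynomial.modByMonic_add_div A B
        have hA' : A.eval (p : ℚ) = (A %ₘ B).eval (p : ℚ) + B.eval (p : ℚ) * t.eval (p : ℚ) := by
          conv_lhs => rw [← hdiv]
          rw [Polynomial.eval_add, Polynomial.eval_mul]
        have hρeq : (A %ₘ B).eval (p : ℚ) = B.eval (p : ℚ) * (cQ - t.eval (p : ℚ)) := by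
          rw [hA'] at hflag
          linear_combination -hflag
        set w : ℤ := (N * Nat.card {U : Submodule (ZMod p) (Fin n → ZMod p) //
          ∀ i, finrank (ZMod p) ↥(U ⊓ stdFlag (ZMod p) n (d i)) = e i} : ℤ) - z with hw
        have hwQ : (w : ℚ) = (N : ℚ) * cQ - z := by
          rw [hw, hcQ]
          push_cast
          ring
        have hNρ : (N : ℚ) * (A %ₘ B).eval (p : ℚ) = B.eval (p : ℚ) * (w : ℚ) := by
          rw [hρeq, hwQ, ← hz]
          ring
        have hBp : 0 < B.eval (p : ℚ) := hBpos _ (by exact_mod_cast hp.one_lt)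
        have habs := hM p (le_trans (le_max_left _ _) hMp)
        rw [Polynomial.eval_smul, smul_eq_mul] at habs
        have hw1 : |(w : ℚ)| < 1 := by
          have h1 : |B.eval (p : ℚ) * (w : ℚ)| < B.eval (p : ℚ) := hNρ ▸ habs
          rw [abs_mul, abs_of_pos hBp] at h1
          have h2 : B.eval (p : ℚ) * |(w : ℚ)| < B.eval (p : ℚ) * 1 := by rwa [mul_one]
          exact (mul_lt_mul_iff_right₀ hBp).mp h2
        have hw0 : w = 0 := by
          have : |w| < 1 := by exact_mod_cast hw1
          exact Int.abs_lt_one_iff.mp this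
        have : (N : ℚ) * (A %ₘ B).eval (p : ℚ) = 0 := by
          rw [hNρ, hw0]
          simp
        have hNne : (N : ℚ) ≠ 0 := by exact_mod_cast hN.ne'
        exact (mul_eq_zero.mp this).resolve_left hNne
      · have hB1 : B = 1 := hBmonic.degree_le_zero_iff_eq_one.mp (not_lt.mp hBd)
        rw [hB1, Polynomial.modByMonic_one]
    refine ⟨t, ?_⟩
    intro F _ _ V _ _ hn Vf h1 h2 h3 h4
    have hflag := key F V hn Vf h1 h2 h3 h4
    have hq : (1 : ℚ) < (Fintype.card F : ℚ) := by exact_mod_cast Fintype.one_lt_card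
    have hBp := hBpos _ hq
    have hdiv := Polynomial.modByMonic_add_div A B
    have hAeq : A.eval (Fintype.card F : ℚ)
        = B.eval (Fintype.card F : ℚ) * t.eval (Fintype.card F : ℚ) := by
      conv_lhs => rw [← hdiv]
      rw [hrem, Polynomial.eval_add, Polynomial.eval_zero, Polynomial.eval_mul, zero_add]
    rw [hAeq] at hflag
    apply mul_right_cancel₀ (ne_of_gt hBp)
    rw [hflag, mul_comm]
  · -- degenerate case
    push_neg at hMC
    obtain ⟨i, hi⟩ := hMC
    have hir : i < r := by
      by_contra h
      push_neg at h
      have h1 : min (i + 1) r = r := by omega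
      have h2 : min i r = r := by omega
      rw [hD, hE] at hi
      simp only [h1, h2] at hi
      omega
    refine ⟨0, ?_⟩
    intro F _ _ V _ _ hn Vf hVfmono hVf0 hVftop hVfd
    haveI : FiniteDimensional F V := findim_of_flag hd0 hdmono hdn hn Vf hVf0 hVftop
    rw [Polynomial.eval_zero]
    have hempty : IsEmpty {U : Submodule F V // ∀ i, finrank F ↥(U ⊓ Vf i) = e i} := by
      constructor
      rintro ⟨U, hU⟩
      set i₁ : Fin (r + 1) := ⟨i, by omega⟩ with hi₁
      set i₂ : Fin (r + 1) := ⟨i + 1, by omega⟩ with hi₂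
      have hile : Vf i₁ ≤ Vf i₂ := hVfmono (show i₁ ≤ i₂ from Fin.le_def.mpr (Nat.le_succ i))
      have h1 := Submodule.finrank_sup_add_finrank_inf_eq (U ⊓ Vf i₂) (Vf i₁)
      have h2 : (U ⊓ Vf i₂) ⊓ Vf i₁ = U ⊓ Vf i₁ := by
        rw [inf_assoc, inf_eq_right.mpr hile]
      have h3 : (U ⊓ Vf i₂) ⊔ Vf i₁ ≤ Vf i₂ := sup_le inf_le_right hile
      have h4 : finrank F ↥((U ⊓ Vf i₂) ⊔ Vf i₁) ≤ d i₂ := by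
        rw [← hVfd i₂]
        exact Submodule.finrank_mono h3
      have hDi : D i = d i₁ := by
        simp only [hD, hi₁]
        congr 1
        exact Fin.ext (show min i r = i by omega)
      have hDi2 : D (i + 1) = d i₂ := by
        simp only [hD, hi₂]
        congr 1
        exact Fin.ext (show min (i + 1) r = i + 1 by omega)
      have hEi : E i = e i₁ := by
        simp only [hE, hi₁]
        congr 1
        exact Fin.ext (show min i r = i by omega)
      have hEi2 : E (i + 1) = e i₂ := by
        simp only [hE, hi₂]
        congr 1
        exact Fin.ext (show min (i + 1) r = i + 1 by omega)
      rw [h2, hU i₁, hU i₂, hVfd i₁] at h1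
      rw [hDi, hDi2, hEi, hEi2] at hi
      omega
    rw [Nat.card_of_isEmpty]
    norm_num
end FlagCount
end

section
/- Let k(U_n(q), GL_n(q)) denote the number of orbits of the group U_n(q) of upper unitriangular matrices acting by conjugation on GL_n(q), and k(U_n(q), PGL_n(q)) the number of orbits of the image of U_n(q) acting by conjugation on PGL_n(q). Then k(U_n(q), GL_n(q)) = (q − 1) · k(U_n(q), PGL_n(q)). -/
set_option linter.unusedSectionVars false

open Matrix

namespace Stmt15Aux

variable {n : ℕ} {F : Type*} [Field F] [Fintype F]

/-- The scalar matrix `c • 1` as an element of `GL n F`. -/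
def sc (n : ℕ) (F : Type*) [Field F] (c : Fˣ) : GL (Fin n) F :=
  Units.map (Matrix.scalar (Fin n)).toMonoidHom c

lemma sc_val (c : Fˣ) : (sc n F c).val = Matrix.scalar (Fin n) (c : F) := rfl

lemma sc_mul (c d : Fˣ) : sc n F (c * d) = sc n F c * sc n F d := map_mul _ _ _

lemma sc_mem_center (c : Fˣ) : sc n F c ∈ Subgroup.center (GL (Fin n) F) := by
  rw [Subgroup.mem_center_iff]
  intro g
  exact Units.ext (Matrix.scalar_commute (c : F) (fun r => mul_comm _ _) g.val).eq.symm

/-- key freeness computation: comparing the lowest nonzero entry of the first column. -/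
lemma key (hn : 1 ≤ n) (u g : GL (Fin n) F)
    (hu : ∀ i j : Fin n, j < i → u.val i j = 0) (hu1 : ∀ i : Fin n, u.val i i = 1)
    (c : F) (h : u.val * g.val = (c • g.val) * u.val) : c = 1 := by
  classical
  set A := g.val with hA
  set Uv := u.val with hUv
  set j0 : Fin n := ⟨0, hn⟩ with hj0
  have hcol : ∃ k, A k j0 ≠ 0 := by
    by_contra hco
    push_neg at hco
    have h1 : ((g⁻¹).val * A) = 1 := g.inv_mul
    have h2 : ((g⁻¹).val * A) j0 j0 = (1 : Matrix (Fin n) (Fin n) F) j0 j0 := by rw [h1]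
    rw [Matrix.mul_apply, Matrix.one_apply_eq] at h2
    have : (∑ k, (g⁻¹).val j0 k * A k j0) = 0 :=
      Finset.sum_eq_zero fun k _ => by rw [hco k, mul_zero]
    rw [this] at h2
    exact zero_ne_one h2
  let s : Finset (Fin n) := Finset.univ.filter fun k => A k j0 ≠ 0
  have hs : s.Nonempty := by
    obtain ⟨k, hk⟩ := hcol
    exact ⟨k, by simp [s, hk]⟩
  set i := s.max' hs with hi
  have hiA : A i j0 ≠ 0 := by
    have := s.max'_mem hs
    simpa [s] using this
  have hmax : ∀ k, i < k → A k j0 = 0 := by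
    intro k hk
    by_contra hne
    exact absurd (s.le_max' k (by simp [s, hne])) (not_le.mpr hk)
  have e1 : (Uv * A) i j0 = A i j0 := by
    rw [Matrix.mul_apply, Finset.sum_eq_single i]
    · rw [hu1 i, one_mul]
    · intro k _ hk
      rcases lt_or_gt_of_ne hk with h1 | h1
      · rw [hu i k h1, zero_mul]
      · rw [hmax k h1, mul_zero]
    · intro hmem; exact absurd (Finset.mem_univ i) hmem
  have e2 : ((c • A) * Uv) i j0 = c * A i j0 := by
    rw [Matrix.mul_apply, Finset.sum_eq_single j0]
    · rw [hu1 j0, Matrix.smul_apply, smul_eq_mul, mul_one]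
    · intro k _ hk
      have hk0 : j0 < k := lt_of_le_of_ne (by simp [hj0, Fin.le_def]) (Ne.symm hk)
      rw [hu k j0 hk0, mul_zero]
    · intro hmem; exact absurd (Finset.mem_univ j0) hmem
  have := congrFun (congrFun h i) j0
  rw [show (Uv * A) i j0 = A i j0 from e1] at this
  rw [e2] at this
  have := this.symm
  nth_rewrite 2 [← one_mul (A i j0)] at this
  exact mul_right_cancel₀ hiA this

lemma center_sc (hn : 1 ≤ n) {z : GL (Fin n) F}
    (hz : z ∈ Subgroup.center (GL (Fin n) F)) : ∃ c : Fˣ, z = sc n F c := by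
  have hcomm : ∀ t : TransvectionStruct (Fin n) F, Commute t.toMatrix z.val := by
    intro t
    let tu : GL (Fin n) F := ⟨t.toMatrix, t.inv.toMatrix, t.mul_inv, t.inv_mul⟩
    exact congrArg Units.val (Subgroup.mem_center_iff.mp hz tu)
  obtain ⟨r, hr⟩ := Matrix.mem_range_scalar_of_commute_transvectionStruct hcomm
  have hr0 : r ≠ 0 := by
    intro h0
    have h1 : z.val * (z⁻¹).val = 1 := z.mul_inv
    have hz0 : z.val = 0 := by
      rw [← hr, h0]
      simp
    rw [hz0, zero_mul] at h1
    have h2 := congrFun (congrFun h1 ⟨0, hn⟩) ⟨0, hn⟩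
    rw [Matrix.one_apply_eq] at h2
    simp at h2
  exact ⟨Units.mk0 r hr0, Units.ext (by rw [sc_val]; exact hr.symm)⟩

/-- freeness at the group level. -/
lemma sc_conj (hn : 1 ≤ n) {u g : GL (Fin n) F}
    (hu : ∀ i j : Fin n, j < i → u.val i j = 0) (hu1 : ∀ i : Fin n, u.val i i = 1)
    {c : Fˣ} (h : u * g * u⁻¹ = sc n F c * g) : c = 1 := by
  have h' : u * g = sc n F c * g * u := by
    rw [← h]; group
  have hm : u.val * g.val = (((c : F)) • g.val) * u.val := by
    have h2 := congrArg Units.val h'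
    rw [Units.val_mul, Units.val_mul, Units.val_mul, sc_val, Matrix.scalar_apply,
      ← Matrix.smul_eq_diagonal_mul] at h2
    exact h2
  exact Units.ext (key hn u g hu hu1 (c : F) hm)

lemma mk_central_mul {G : Type*} [Group G] {z : G} (hz : z ∈ Subgroup.center G) (g : G) :
    (QuotientGroup.mk (z * g) : G ⧸ Subgroup.center G) = QuotientGroup.mk g := by
  have hz' := Subgroup.mem_center_iff.mp (inv_mem hz)
  have he : (z * g)⁻¹ * g = z⁻¹ := by
    rw [_root_.mul_inv_rev, mul_assoc, ← hz' g, ← mul_assoc, inv_mul_cancel, one_mul]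
  rw [QuotientGroup.eq, he]
  exact inv_mem hz

lemma image_orb {G : Type*} [Group G] (U : Set G) (g : G) :
    (QuotientGroup.mk '' {h | ∃ x ∈ U, x * g * x⁻¹ = h} :
      Set (G ⧸ Subgroup.center G)) =
    {h | ∃ x ∈ (QuotientGroup.mk '' U : Set (G ⧸ Subgroup.center G)),
      x * (QuotientGroup.mk g) * x⁻¹ = h} := by
  ext h
  constructor
  · rintro ⟨a, ⟨x, hx, rfl⟩, rfl⟩
    exact ⟨QuotientGroup.mk x, ⟨x, hx, rfl⟩, by simp⟩
  · rintro ⟨_, ⟨x, hx, rfl⟩, rfl⟩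
    exact ⟨x * g * x⁻¹, ⟨x, hx, rfl⟩, by simp⟩

end Stmt15Aux



open Matrix

namespace Stmt15Aux

variable {n : ℕ} {F : Type*} [Field F] [Fintype F]

section USet

variable (U : Set (GL (Fin n) F))
variable (hU : U = {g : GL (Fin n) F |
      (∀ i j : Fin n, j < i → g.val i j = 0) ∧ ∀ i : Fin n, g.val i i = 1})

include hU

lemma U_one : (1 : GL (Fin n) F) ∈ U := by
  rw [hU]
  refine ⟨fun i j hij => ?_, fun i => ?_⟩
  · rw [Units.val_one, Matrix.one_apply_ne (ne_of_gt hij)]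
  · rw [Units.val_one, Matrix.one_apply_eq]

lemma U_mul {a b : GL (Fin n) F} (ha : a ∈ U) (hb : b ∈ U) : a * b ∈ U := by
  rw [hU] at ha hb ⊢
  obtain ⟨ha1, ha2⟩ := ha
  obtain ⟨hb1, hb2⟩ := hb
  constructor
  · intro i j hij
    rw [Units.val_mul, Matrix.mul_apply]
    refine Finset.sum_eq_zero fun k _ => ?_
    rcases lt_or_ge k i with h1 | h1
    · rw [ha1 i k h1, zero_mul]
    · rw [hb1 k j (lt_of_lt_of_le hij h1), mul_zero]
  · intro i
    rw [Units.val_mul, Matrix.mul_apply, Finset.sum_eq_single i]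
    · rw [ha2 i, hb2 i, one_mul]
    · intro k _ hk
      rcases lt_or_gt_of_ne hk with h1 | h1
      · rw [ha1 i k h1, zero_mul]
      · rw [hb1 k i h1, mul_zero]
    · intro h; exact absurd (Finset.mem_univ i) h

lemma U_pow {a : GL (Fin n) F} (ha : a ∈ U) : ∀ m : ℕ, a ^ (m + 1) ∈ U := by
  intro m
  induction m with
  | zero => simpa using ha
  | succ k ih => rw [pow_succ]; exact U_mul U hU ih ha

lemma U_inv {a : GL (Fin n) F} (ha : a ∈ U) : a⁻¹ ∈ U := by
  have ho : 0 < orderOf a := orderOf_pos a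
  obtain ⟨m, hm⟩ : ∃ m, orderOf a = m + 1 := ⟨orderOf a - 1, (Nat.succ_pred_eq_of_pos ho).symm⟩
  have h1 : a⁻¹ = a ^ m := by
    have h2 := pow_orderOf_eq_one a
    rw [hm, pow_succ'] at h2
    exact inv_eq_of_mul_eq_one_right h2
  cases m with
  | zero => rw [h1, pow_zero]; exact U_one U hU
  | succ k => rw [h1]; exact U_pow U hU ha k

end USet

theorem main (n : ℕ) (hn : 1 ≤ n) (F : Type*) [Field F] [Fintype F]
    (U : Set (GL (Fin n) F))
    (hU : U = {g : GL (Fin n) F |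
      (∀ i j : Fin n, j < i → g.val i j = 0) ∧ ∀ i : Fin n, g.val i i = 1}) :
    Nat.card {C : Set (GL (Fin n) F) //
        ∃ g : GL (Fin n) F, C = {h | ∃ x ∈ U, x * g * x⁻¹ = h}}
      = (Fintype.card F - 1) * Nat.card {C : Set (GL (Fin n) F ⧸
            Subgroup.center (GL (Fin n) F)) //
          ∃ g : GL (Fin n) F ⧸ Subgroup.center (GL (Fin n) F),
          C = {h | ∃ x ∈ (QuotientGroup.mk '' U :
              Set (GL (Fin n) F ⧸ Subgroup.center (GL (Fin n) F))),
            x * g * x⁻¹ = h}} := by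
  classical
  let orb : GL (Fin n) F → Set (GL (Fin n) F) := fun g => {h | ∃ x ∈ U, x * g * x⁻¹ = h}
  let Q := GL (Fin n) F ⧸ Subgroup.center (GL (Fin n) F)
  let orbQ : Q → Set Q := fun g => {h | ∃ x ∈ (QuotientGroup.mk '' U : Set Q), x * g * x⁻¹ = h}
  let X := {C : Set (GL (Fin n) F) // ∃ g, C = orb g}
  let Y := {C : Set Q // ∃ g, C = orbQ g}
  show Nat.card X = (Fintype.card F - 1) * Nat.card Y
  have orb_self : ∀ g, g ∈ orb g := fun g => ⟨1, U_one U hU, by group⟩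
  have orb_conj : ∀ {u : GL (Fin n) F}, u ∈ U → ∀ g, orb (u * g * u⁻¹) = orb g := by
    intro u hu g
    ext h
    constructor
    · rintro ⟨x, hx, rfl⟩
      exact ⟨x * u, U_mul U hU hx hu, by group⟩
    · rintro ⟨x, hx, rfl⟩
      exact ⟨x * u⁻¹, U_mul U hU hx (U_inv U hU hu), by group⟩
  have himage : ∀ g, (QuotientGroup.mk '' orb g : Set Q) = orbQ (QuotientGroup.mk g) :=
    fun g => image_orb U g
  let Φ : X → Y := fun C => ⟨QuotientGroup.mk '' C.1, by
    obtain ⟨g, hg⟩ := C.2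
    exact ⟨QuotientGroup.mk g, by rw [hg]; exact himage g⟩⟩
  have fib : ∀ y : Y, Nonempty ({x : X // Φ x = y} ≃ Fˣ) := by
    intro y
    obtain ⟨gq, hgq⟩ := y.2
    obtain ⟨g0, rfl⟩ := QuotientGroup.mk_surjective gq
    let β : Fˣ → {x : X // Φ x = y} := fun c =>
      ⟨⟨orb (sc n F c * g0), ⟨_, rfl⟩⟩, Subtype.ext (by
        show QuotientGroup.mk '' orb (sc n F c * g0) = y.1
        rw [himage, mk_central_mul (sc_mem_center c) g0]
        exact hgq.symm)⟩
    have hβinj : Function.Injective β := by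
      intro c c' hcc
      have horb : orb (sc n F c * g0) = orb (sc n F c' * g0) :=
        congrArg (fun x => x.1.1) hcc
      have hmem : sc n F c * g0 ∈ orb (sc n F c' * g0) := horb ▸ orb_self _
      obtain ⟨u, hu, huc⟩ := hmem
      have hu' : (∀ i j : Fin n, j < i → u.val i j = 0) ∧ ∀ i : Fin n, u.val i i = 1 := by
        rw [hU] at hu; exact hu
      have hrw : sc n F c * g0 = sc n F (c * c'⁻¹) * (sc n F c' * g0) := by
        rw [← mul_assoc, ← sc_mul, inv_mul_cancel_right]
      rw [hrw] at huc
      have hone : c * c'⁻¹ = 1 := sc_conj hn hu'.1 hu'.2 huc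
      rwa [mul_inv_eq_one] at hone
    have hβsurj : Function.Surjective β := by
      rintro ⟨⟨C, g1, rfl⟩, hx⟩
      have hx1 : (QuotientGroup.mk '' orb g1 : Set Q) = y.1 := congrArg Subtype.val hx
      have hmq : QuotientGroup.mk g1 ∈ orbQ (QuotientGroup.mk g0) := by
        rw [← hgq, ← hx1]
        exact ⟨g1, orb_self g1, rfl⟩
      obtain ⟨_, ⟨u, hu, rfl⟩, huq⟩ := hmq
      have hmk : (QuotientGroup.mk (u * g0 * u⁻¹) : Q) = QuotientGroup.mk g1 := by
        simpa using huq
      rw [QuotientGroup.eq] at hmk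
      obtain ⟨c, hc⟩ := center_sc hn hmk
      have hcen := Subgroup.mem_center_iff.mp (sc_mem_center (n := n) (F := F) c)
      have hg1 : g1 = u * (sc n F c * g0) * u⁻¹ := by
        have h1 : g1 = (u * g0 * u⁻¹) * ((u * g0 * u⁻¹)⁻¹ * g1) := by group
        rw [hc] at h1
        rw [h1, hcen (u * g0 * u⁻¹)]
        simp only [← mul_assoc]
        rw [← hcen u]
      refine ⟨c, Subtype.ext (Subtype.ext ?_)⟩
      show orb (sc n F c * g0) = orb g1
      rw [hg1, orb_conj hu]
    exact ⟨(Equiv.ofBijective β ⟨hβinj, hβsurj⟩).symm⟩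
  have e : X ≃ Y × Fˣ :=
    (Equiv.sigmaFiberEquiv Φ).symm.trans
      ((Equiv.sigmaCongrRight fun y => (fib y).some).trans (Equiv.sigmaEquivProd Y Fˣ))
  rw [Nat.card_congr e, Nat.card_prod, Nat.card_units, Nat.card_eq_fintype_card (α := F)]
  exact Nat.mul_comm _ _

end Stmt15Aux


/-- `k(U_n(q), GL_n(q)) = (q − 1) · k(U_n(q), PGL_n(q))`: the number of orbits of the
upper unitriangular group `U_n(q)` acting by conjugation on `GL_n(q)` is `q − 1` times
the number of orbits of its image acting by conjugation on
`PGL_n(q) = GL_n(q)/Z` (`Z` the scalar matrices, i.e. the centre). -/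
theorem stmt_15 (n : ℕ) (hn : 1 ≤ n) (F : Type*) [Field F] [Fintype F]
    (q : ℕ) (hq : q = Fintype.card F)
    (U : Set (Matrix.GeneralLinearGroup (Fin n) F))
    (hU : U = {g : Matrix.GeneralLinearGroup (Fin n) F |
      (∀ i j : Fin n, j < i → g.val i j = 0) ∧ ∀ i : Fin n, g.val i i = 1}) :
    Nat.card {C : Set (Matrix.GeneralLinearGroup (Fin n) F) //
        ∃ g : Matrix.GeneralLinearGroup (Fin n) F,
          C = {h | ∃ x ∈ U, x * g * x⁻¹ = h}}
      = (q - 1) * Nat.card {C : Set (Matrix.GeneralLinearGroup (Fin n) F ⧸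
            Subgroup.center (Matrix.GeneralLinearGroup (Fin n) F)) //
          ∃ g : Matrix.GeneralLinearGroup (Fin n) F ⧸
            Subgroup.center (Matrix.GeneralLinearGroup (Fin n) F),
          C = {h | ∃ x ∈ (QuotientGroup.mk '' U :
              Set (Matrix.GeneralLinearGroup (Fin n) F ⧸
                Subgroup.center (Matrix.GeneralLinearGroup (Fin n) F))),
            x * g * x⁻¹ = h}} := by
  subst hq
  exact Stmt15Aux.main n hn F U hU
end

section
/- For n = 2: the number of conjugation orbits of the group U₂(q) of upper unitriangular 2×2 matrices on PGL₂(q) equals q² + q − 2, for every prime power q. -/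
/-!
Burnside's lemma for the image `Ū ≅ F` of the upper unitriangular group acting on `PGL₂(F)` by
conjugation. The identity fixes all `q³ - q` elements of `PGL₂(F)`; a nontrivial element of `Ū`
has centralizer exactly `Ū` (a matrix commuting with `!![1, t; 0, 1]` up to a scalar is a scalar
times a unitriangular matrix), so it fixes `q` elements. Hence the number of orbits is
`(q³ - q + (q - 1) q) / q = q² + q - 2`.
-/

open MulAction Matrix Subgroup

namespace Subgroup

variable {G : Type*} [Group G]

/-- `H` acting on `G` by conjugation. -/
abbrev conjAct (H : Subgroup G) : Subgroup (ConjAct G) := H.map ConjAct.toConjAct.toMonoidHom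

lemma mem_orbit_conjAct_iff {H : Subgroup G} {g h : G} :
    h ∈ orbit H.conjAct g ↔ ∃ x ∈ H, x * g * x⁻¹ = h := by
  simp [mem_orbit_iff, Subgroup.smul_def, ConjAct.smul_def]

lemma mem_fixedBy_conjAct_iff {H : Subgroup G} (k : H.conjAct) (g : G) :
    g ∈ fixedBy G k ↔ g ∈ centralizer {ConjAct.ofConjAct (k : ConjAct G)} := by
  rw [mem_fixedBy, Subgroup.smul_def, ConjAct.smul_def, mul_inv_eq_iff_eq_mul, eq_comm]
  simp [mem_centralizer_iff, eq_comm]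

lemma card_setOf_conjOrbits (H : Subgroup G) :
    Nat.card {C : Set G // ∃ g, C = {h | ∃ x ∈ (H : Set G), x * g * x⁻¹ = h}} =
      Nat.card (orbitRel.Quotient H.conjAct G) := by
  have hC : ∀ C : Set G, (∃ g, C = {h | ∃ x ∈ (H : Set G), x * g * x⁻¹ = h}) ↔
      C ∈ Set.range (orbitRel.Quotient.orbit (G := H.conjAct) (α := G)) := by
    intro C
    rw [← Quotient.mk''_surjective.range_comp]
    simp only [Set.mem_range, Function.comp_apply, orbitRel.Quotient.orbit_mk, eq_comm (a := C)]
    simp only [Set.ext_iff, mem_orbit_conjAct_iff, SetLike.mem_coe, Set.mem_ofPred_eq]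
  rw [Nat.card_congr (Equiv.subtypeEquivRight hC),
    ← Nat.card_congr (Equiv.ofInjective _ orbitRel.Quotient.orbit_injective)]

lemma card_orbitRel_conjAct_mul_card [Finite G] (H : Subgroup G)
    (hH : ∀ h ∈ H, h ≠ 1 → centralizer {h} = H) :
    Nat.card (orbitRel.Quotient H.conjAct G) * Nat.card H =
      Nat.card G + (Nat.card H - 1) * Nat.card H := by
  classical
  have : Fintype H := Fintype.ofFinite H
  let e : H ≃ H.conjAct := (H.equivMapOfInjective _ ConjAct.toConjAct.injective).toEquiv
  have : Fintype H.conjAct := Fintype.ofEquiv _ e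
  have hfix (h : H) : Nat.card (fixedBy G (e h)) =
      if h = 1 then Nat.card G else Nat.card H := by
    have hs : (fixedBy G (e h)) = (centralizer {(h : G)} : Set G) := by
      ext g; exact mem_fixedBy_conjAct_iff (e h) g
    split_ifs with h1
    · rw [hs, h1]; simp
    · rw [hs, hH h h.2 (by simpa using h1)]; rfl
  have burnside := Nat.card_congr (sigmaFixedByEquivOrbitsProdGroup H.conjAct G)
  rw [Nat.card_sigma, Nat.card_prod, ← Nat.card_congr e, ← e.sum_comp] at burnside
  simp only [hfix, Finset.sum_ite, Finset.sum_const, Finset.filter_eq', Finset.filter_ne',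
    Finset.mem_univ, if_true, Finset.card_singleton, Finset.card_erase_of_mem, Finset.card_univ,
    ← Nat.card_eq_fintype_card, smul_eq_mul, one_mul] at burnside
  exact burnside.symm

end Subgroup

namespace Matrix.GeneralLinearGroup

lemma setOf_upperUnitriangular_eq_range_upperRightHom {R : Type*} [Ring R] :
    {g : GL (Fin 2) R | (∀ i j : Fin 2, j < i → g.val i j = 0) ∧ ∀ i : Fin 2, g.val i i = 1} =
      Set.range upperRightHom := by
  ext g
  constructor
  · rintro ⟨hlow, hdiag⟩
    refine ⟨g 0 1, Units.ext ?_⟩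
    ext i j
    fin_cases i <;> fin_cases j
    · exact (hdiag 0).symm
    · rfl
    · exact (hlow 1 0 Fin.zero_lt_one).symm
    · exact (hdiag 1).symm
  · rintro ⟨t, rfl⟩
    refine ⟨fun i j hij => ?_, fun i => ?_⟩
    · fin_cases i <;> fin_cases j <;> simp_all
    · fin_cases i <;> simp

lemma injective_scalar {n R : Type*} [Fintype n] [DecidableEq n] [Nonempty n] [CommRing R] :
    Function.Injective (scalar n : Rˣ →* GL n R) := by
  intro u v h
  obtain ⟨i⟩ := ‹Nonempty n›
  exact Units.ext (by simpa using (GeneralLinearGroup.ext_iff _ _).mp h i i)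

lemma card_center {n R : Type*} [Fintype n] [DecidableEq n] [Nonempty n] [CommRing R] :
    Nat.card (center (GL n R)) = Nat.card Rˣ := by
  rw [center_eq_range_scalar]
  exact (Nat.card_congr (MonoidHom.ofInjective injective_scalar).toEquiv).symm

variable (R : Type*) [CommRing R]

def unipotentPGL : Subgroup (GL (Fin 2) R ⧸ center (GL (Fin 2) R)) :=
  ((QuotientGroup.mk' _).comp upperRightHom.toMonoidHom).range

variable {R}

lemma injective_mk_upperRightHom :
    Function.Injective ((QuotientGroup.mk' (center (GL (Fin 2) R))).comp
      (upperRightHom (R := R)).toMonoidHom) := by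
  intro a b h
  obtain ⟨z, hz, hab⟩ := (QuotientGroup.mk'_eq_mk' _).mp h
  obtain ⟨c, rfl⟩ := center_eq_range_scalar (n := Fin 2) (R := R) ▸ hz
  have h00 := (GeneralLinearGroup.ext_iff _ _).mp hab 0 0
  have h01 := (GeneralLinearGroup.ext_iff _ _).mp hab 0 1
  simp only [AddChar.toMonoidHom_apply, upperRightHom_apply, Units.val_mul, coe_scalar,
    scalar_apply, mul_diagonal, of_apply, cons_val', cons_val_zero, cons_val_fin_one, one_mul,
    Units.val_eq_one, cons_val_one] at h00 h01
  simpa [h00] using h01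

lemma card_unipotentPGL : Nat.card (unipotentPGL R) = Nat.card R :=
  (Nat.card_congr (MonoidHom.ofInjective injective_mk_upperRightHom).toEquiv).symm

instance : IsMulCommutative (unipotentPGL R) := range_isMulCommutative _

variable {F : Type*} [Field F]

lemma card_PGL_two [Fintype F] :
    (Nat.card (GL (Fin 2) F ⧸ center (GL (Fin 2) F)) : ℤ) =
      Fintype.card F ^ 3 - Fintype.card F := by
  have h := card_eq_card_quotient_mul_card_subgroup (center (GL (Fin 2) F))
  rw [card_GL_field, card_center, Nat.card_units, Nat.card_eq_fintype_card (α := F),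
    Fin.prod_univ_two, Fin.val_zero, Fin.val_one, pow_zero, pow_one] at h
  set q := Fintype.card F
  have hq : 1 < q := Fintype.one_lt_card
  have hq2 : q ≤ q ^ 2 := Nat.le_self_pow two_ne_zero q
  have h' := congr_arg (Nat.cast : ℕ → ℤ) h
  push_cast [hq.le, hq2, hq.le.trans hq2] at h'
  have hq1 : (q : ℤ) - 1 ≠ 0 := by omega
  refine mul_right_cancel₀ hq1 ?_
  linear_combination -h'

lemma eq_of_upperRightHom_mul_mul_scalar {A : GL (Fin 2) F} {t : F} (ht : t ≠ 0) {c : Fˣ}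
    (h : upperRightHom t * A * scalar (Fin 2) c = A * upperRightHom t) :
    A 1 0 = 0 ∧ A 0 0 = A 1 1 := by
  have e := (GeneralLinearGroup.ext_iff _ _).mp h
  have e00 := e 0 0
  have e01 := e 0 1
  have e10 := e 1 0
  have e11 := e 1 1
  simp only [upperRightHom_apply, Units.val_mul, cons_mul, Nat.succ_eq_add_one, Nat.reduceAdd,
    empty_mul, Equiv.symm_apply_apply, coe_scalar, scalar_apply, mul_apply, of_apply, cons_val',
    vecMul, dotProduct, Fin.sum_univ_two, cons_val_zero, one_mul, cons_val_one, cons_val_fin_one,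
    zero_mul, zero_add, diagonal_apply_eq, ne_eq, one_ne_zero, not_false_eq_true,
    diagonal_apply_ne, mul_zero, add_zero, mul_one, zero_ne_one] at e00 e01 e10 e11
  have h10 : A 1 0 = 0 := by
    by_contra hne
    have hc : (c : F) = 1 := mul_left_cancel₀ hne (by rw [mul_one]; exact e10)
    rw [hc, mul_one, add_eq_left] at e00
    exact mul_ne_zero ht hne e00
  have hdet : A 0 0 * A 1 1 ≠ 0 := by simpa [det_fin_two, h10] using A.det_ne_zero
  have hc : (c : F) = 1 :=
    mul_left_cancel₀ (right_ne_zero_of_mul hdet) (by simpa [h10, mul_comm] using e11)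
  refine ⟨h10, mul_left_cancel₀ ht ?_⟩
  rw [hc, mul_one] at e01
  linear_combination -e01

lemma mk_mem_unipotentPGL {A : GL (Fin 2) F} (h10 : A 1 0 = 0) (hd : A 0 0 = A 1 1) :
    (A : GL (Fin 2) F ⧸ center (GL (Fin 2) F)) ∈ unipotentPGL F := by
  have ha : A 0 0 ≠ 0 := left_ne_zero_of_mul (by simpa [det_fin_two, h10] using A.det_ne_zero)
  refine ⟨Multiplicative.ofAdd (A 0 1 / A 0 0), (QuotientGroup.mk'_eq_mk' _).mpr
    ⟨scalar (Fin 2) (Units.mk0 _ ha), mem_center_iff.mpr fun g => (scalar_commute _ g).symm, ?_⟩⟩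
  ext i j
  fin_cases i <;> fin_cases j <;> simp [h10, hd, div_mul_cancel₀ _ (hd ▸ ha)]

lemma centralizer_eq_unipotentPGL {x : GL (Fin 2) F ⧸ center (GL (Fin 2) F)}
    (hx : x ∈ unipotentPGL F) (hx1 : x ≠ 1) : centralizer {x} = unipotentPGL F := by
  refine le_antisymm (fun g hg => ?_)
    ((le_centralizer _).trans (centralizer_le (Set.singleton_subset_iff.mpr hx)))
  obtain ⟨t, rfl⟩ := hx
  have ht : t.toAdd ≠ 0 := by
    intro h
    exact hx1 (by rw [show t = 1 from h, map_one])
  induction g using QuotientGroup.induction_on with | H A => ?_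
  rw [mem_centralizer_singleton_iff] at hg
  obtain ⟨z, hz, h⟩ := (QuotientGroup.mk'_eq_mk' _).mp
    (show QuotientGroup.mk' _ (upperRightHom t.toAdd * A) =
      QuotientGroup.mk' _ (A * upperRightHom t.toAdd) from hg.symm)
  obtain ⟨c, rfl⟩ := center_eq_range_scalar (n := Fin 2) (R := F) ▸ hz
  obtain ⟨h10, hd⟩ := eq_of_upperRightHom_mul_mul_scalar ht h
  exact mk_mem_unipotentPGL h10 hd


end Matrix.GeneralLinearGroup

open Matrix.GeneralLinearGroup

/-- The number of conjugation orbits of the image of the group `U₂(q)` of upper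
unitriangular `2×2` matrices on `PGL₂(q) = GL₂(q)/{scalars}` equals `q² + q − 2`
for every prime power `q`. -/
theorem stmt_16 (F : Type*) [Field F] [Fintype F] (q : ℕ) (hq : q = Fintype.card F)
    (U : Set (Matrix.GeneralLinearGroup (Fin 2) F))
    (hU : U = {g : Matrix.GeneralLinearGroup (Fin 2) F |
      (∀ i j : Fin 2, j < i → g.val i j = 0) ∧ ∀ i : Fin 2, g.val i i = 1}) :
    (Nat.card {C : Set (Matrix.GeneralLinearGroup (Fin 2) F ⧸
        Subgroup.center (Matrix.GeneralLinearGroup (Fin 2) F)) //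
      ∃ g : Matrix.GeneralLinearGroup (Fin 2) F ⧸
          Subgroup.center (Matrix.GeneralLinearGroup (Fin 2) F),
        C = {h | ∃ x ∈ (QuotientGroup.mk '' U :
            Set (Matrix.GeneralLinearGroup (Fin 2) F ⧸
              Subgroup.center (Matrix.GeneralLinearGroup (Fin 2) F))),
          x * g * x⁻¹ = h}} : ℤ) = q ^ 2 + q - 2 := by
  have hUbar : (QuotientGroup.mk '' U : Set (GL (Fin 2) F ⧸ center (GL (Fin 2) F))) =
      unipotentPGL F := by
    rw [hU, setOf_upperUnitriangular_eq_range_upperRightHom, unipotentPGL, MonoidHom.coe_range,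
      MonoidHom.coe_comp, Set.range_comp]
    rfl
  rw [hUbar, card_setOf_conjOrbits]
  have burnside := card_orbitRel_conjAct_mul_card (unipotentPGL F)
    fun _ hx hx1 => centralizer_eq_unipotentPGL hx hx1
  rw [card_unipotentPGL, Nat.card_eq_fintype_card (α := F), ← hq] at burnside
  have hq1 : 1 ≤ q := hq ▸ Fintype.card_pos
  have h := congr_arg (Nat.cast : ℕ → ℤ) burnside
  push_cast [hq1, card_PGL_two, ← hq] at h
  refine mul_right_cancel₀ (show (q : ℤ) ≠ 0 by omega) ?_
  linear_combination h
end

section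
/- Let g, h, k ∈ ℚ[z] with k ≠ 0 and deg h < deg k, and suppose g(n) + h(n)/k(n) ∈ ℤ for infinitely many integers n (with k(n) ≠ 0). Then h = 0. -/
open Polynomial Filter

lemma comp_negX_degree {p : ℚ[X]} (hp : p ≠ 0) : (p.comp (-X)).degree = p.degree := by
  have hne : p.comp (-X) ≠ 0 := by
    intro h0
    have : (p.comp (-X)).comp (-X) = p := by
      rw [comp_assoc]; simp
    rw [h0, zero_comp] at this
    exact hp this.symm
  rw [degree_eq_natDegree hne, degree_eq_natDegree hp, natDegree_comp]
  norm_num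

/-- If `g, h, k ∈ ℚ[z]`, `k ≠ 0`, `deg h < deg k`, and `g(n) + h(n)/k(n)` is an
integer for infinitely many integers `n` (with `k(n) ≠ 0`), then `h = 0`. -/
theorem stmt_18 (g h k : Polynomial ℚ) (hk : k ≠ 0) (hdeg : h.degree < k.degree)
    (hint : {n : ℤ | k.eval (n : ℚ) ≠ 0 ∧
      ∃ m : ℤ, g.eval (n : ℚ) + h.eval (n : ℚ) / k.eval (n : ℚ) = m}.Infinite) :
    h = 0 := by
  by_contra hne
  obtain ⟨d, hd⟩ := IsLocalization.integerNormalization_map_to_map (nonZeroDivisors ℤ) g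
  set G := IsLocalization.integerNormalization (nonZeroDivisors ℤ) g with hG
  have hd0 : (d : ℤ) ≠ 0 := nonZeroDivisors.coe_ne_zero d
  have hdQ : ((d : ℤ) : ℚ) ≠ 0 := Int.cast_ne_zero.mpr hd0
  -- the polynomial P = d • h
  set P : ℚ[X] := C ((d : ℤ) : ℚ) * h with hP
  have hPne : P ≠ 0 := mul_ne_zero (by simp [hdQ]) hne
  have hPdeg : P.degree < k.degree := by rwa [hP, degree_C_mul hdQ]
  -- key: for n in the set with h(n) ≠ 0, 1 ≤ |P(n)/k(n)|
  have key : ∀ n : ℤ, k.eval (n : ℚ) ≠ 0 →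
      (∃ m : ℤ, g.eval (n : ℚ) + h.eval (n : ℚ) / k.eval (n : ℚ) = m) →
      h.eval (n : ℚ) ≠ 0 → 1 ≤ |P.eval (n : ℚ) / k.eval (n : ℚ)| := by
    intro n hkn ⟨m, hm⟩ hhn
    have hgval : ((G.eval n : ℤ) : ℚ) = ((d : ℤ) : ℚ) * g.eval (n : ℚ) := by
      have := congrArg (Polynomial.eval ((n : ℤ) : ℚ)) hd
      simpa [eval_intCast_map, zsmul_eq_mul] using this
    set q : ℤ := (d : ℤ) * m - G.eval n with hq
    have hqval : (q : ℚ) = P.eval (n : ℚ) / k.eval (n : ℚ) := by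
      have hhk : h.eval (n : ℚ) / k.eval (n : ℚ) = (m : ℚ) - g.eval (n : ℚ) := by
        linarith
      rw [hP, eval_mul, eval_C, mul_div_assoc, hhk, hq]
      push_cast
      rw [hgval]
      ring
    have hq0 : q ≠ 0 := by
      intro h0
      rw [h0, Int.cast_zero] at hqval
      have h2 : P.eval (n : ℚ) = 0 := by
        rcases div_eq_zero_iff.mp hqval.symm with h2 | h2
        · exact h2
        · exact absurd h2 hkn
      rw [hP, eval_mul, eval_C] at h2
      exact (mul_ne_zero hdQ hhn) h2
    have : (1 : ℚ) ≤ |(q : ℚ)| := by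
      rw [← Int.cast_abs]
      exact_mod_cast Int.one_le_abs hq0
    rwa [hqval] at this
  -- tendsto at +∞
  have T1 : Tendsto (fun x : ℚ => P.eval x / k.eval x) atTop (nhds 0) :=
    Polynomial.div_tendsto_zero_of_degree_lt P k hPdeg
  have T1' : ∀ᶠ x : ℚ in atTop, |P.eval x / k.eval x| < 1 := by
    filter_upwards [T1.eventually (eventually_abs_sub_lt 0 one_pos)] with x hx
    simpa using hx
  obtain ⟨R1, hR1⟩ := eventually_atTop.mp T1'
  -- tendsto at -∞ via comp with -X
  have hP2deg : (P.comp (-X)).degree < (k.comp (-X)).degree := by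
    rw [comp_negX_degree hPne, comp_negX_degree hk]; exact hPdeg
  have T2 : Tendsto (fun x : ℚ => (P.comp (-X)).eval x / (k.comp (-X)).eval x) atTop (nhds 0) :=
    Polynomial.div_tendsto_zero_of_degree_lt _ _ hP2deg
  have T2' : ∀ᶠ x : ℚ in atTop, |P.eval (-x) / k.eval (-x)| < 1 := by
    filter_upwards [T2.eventually (eventually_abs_sub_lt 0 one_pos)] with x hx
    simpa [eval_comp] using hx
  obtain ⟨R2, hR2⟩ := eventually_atTop.mp T2'
  -- the infinite set minus roots of h
  have hroots : ({n : ℤ | h.eval (n : ℚ) = 0}).Finite := by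
    have : ({n : ℤ | h.eval (n : ℚ) = 0}) = (fun n : ℤ => (n : ℚ)) ⁻¹' {x | h.IsRoot x} := rfl
    rw [this]
    exact Set.Finite.preimage (fun a _ b _ hab => by exact_mod_cast hab)
      (Polynomial.finite_setOf_isRoot hne)
  have hinf2 : ({n : ℤ | k.eval (n : ℚ) ≠ 0 ∧
      (∃ m : ℤ, g.eval (n : ℚ) + h.eval (n : ℚ) / k.eval (n : ℚ) = m)} \
      {n : ℤ | h.eval (n : ℚ) = 0}).Infinite := hint.diff hroots
  -- but this set is bounded, hence finite
  refine hinf2 (Set.Finite.subset (Set.finite_Icc (⌈-R2⌉) (⌊R1⌋)) ?_)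
  rintro n ⟨⟨hkn, hm⟩, hhn⟩
  have h1 : 1 ≤ |P.eval (n : ℚ) / k.eval (n : ℚ)| := key n hkn hm (by simpa using hhn)
  constructor
  · rw [Int.ceil_le]
    by_contra hc
    push_neg at hc
    have : R2 ≤ -(n : ℚ) := by linarith
    have := hR2 (-(n : ℚ)) this
    simp only [neg_neg] at this
    linarith [h1]
  · rw [Int.le_floor]
    by_contra hc
    push_neg at hc
    have := hR1 (n : ℚ) (le_of_lt hc)
    linarith [h1]
end

section
/- Let q be a prime power, and let N be a positive integer. Suppose k ∈ ℚ[z] is a polynomial such that k(qˢ)/q^{sN} is an integer for all positive integers s. Then z^N divides k(z) in ℚ[z], i.e., h(z) = k(z)/z^N is a polynomial. -/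
/-!
Clear denominators: `b • k = K` with `0 ≠ b ∈ ℤ` and `K ∈ ℤ[X]`. Since `qˢ ∣ K(qˢ) - K(0)` and, by hypothesis,
`qˢ ∣ K(qˢ)`, every power of `q` divides the integer `K(0)`, which is therefore `0`; so `X ∣ k`.
Dividing by `X` lowers `N` by one, and induction on `N` gives `X ^ N ∣ k`.
-/

open Polynomial

namespace Polynomial

theorem exists_map_intCastRingHom_eq_smul (k : ℚ[X]) :
    ∃ (b : ℤ) (K : ℤ[X]), b ≠ 0 ∧ K.map (Int.castRingHom ℚ) = (b : ℚ) • k := by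
  obtain ⟨b, hb, hK⟩ := IsLocalization.integerNormalization_spec (nonZeroDivisors ℤ) (S := ℚ) k
  refine ⟨b, IsLocalization.integerNormalization (nonZeroDivisors ℤ) k,
    nonZeroDivisors.ne_zero hb, ?_⟩
  rw [← algebraMap_int_eq, hK, zsmul_eq_mul, smul_eq_C_mul]
  norm_cast

theorem eval_zero_eq_zero_of_forall_eval_pow_eq {q : ℤ} (hq : ¬IsUnit q) {k : ℚ[X]}
    (h : ∀ s : ℕ, 1 ≤ s → ∃ m : ℤ, k.eval ((q : ℚ) ^ s) = m * (q : ℚ) ^ s) :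
    k.eval 0 = 0 := by
  obtain ⟨b, K, hb, hK⟩ := exists_map_intCastRingHom_eq_smul k
  have eval_K (x : ℤ) : ((K.eval x : ℤ) : ℚ) = b * k.eval (x : ℚ) := by
    simpa using congrArg (eval (x : ℚ)) hK
  have pow_dvd_K_zero (s : ℕ) (hs : 1 ≤ s) : q ^ s ∣ K.eval 0 := by
    obtain ⟨m, hm⟩ := h s hs
    have hKq : K.eval (q ^ s) = b * m * q ^ s := by
      have := eval_K (q ^ s)
      push_cast [hm, ← mul_assoc] at this
      exact_mod_cast this
    have h_diff : q ^ s ∣ K.eval (q ^ s) - K.eval 0 := by simpa using sub_dvd_eval_sub (q ^ s) 0 K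
    simpa [hKq] using (dvd_mul_left (q ^ s) (b * m)).sub h_diff
  have hK0 : K.eval 0 = 0 := by
    by_contra hne
    obtain ⟨n, hn⟩ := FiniteMultiplicity.of_not_isUnit hq hne
    exact hn (pow_dvd_K_zero (n + 1) n.succ_pos)
  simpa [hK0, hb] using (eval_K 0).symm

theorem X_pow_dvd_of_forall_eval_pow_eq {q : ℤ} (hq0 : q ≠ 0) (hq : ¬IsUnit q) (N : ℕ)
    {k : ℚ[X]}
    (h : ∀ s : ℕ, 1 ≤ s → ∃ m : ℤ, k.eval ((q : ℚ) ^ s) = m * (q : ℚ) ^ (s * N)) :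
    X ^ N ∣ k := by
  induction N generalizing k with
  | zero => simp
  | succ N ih =>
    have hk0 : k.eval 0 = 0 := by
      refine eval_zero_eq_zero_of_forall_eval_pow_eq hq fun s hs ↦ ?_
      obtain ⟨m, hm⟩ := h s hs
      exact ⟨m * q ^ (s * N), by rw [hm]; push_cast; ring⟩
    obtain ⟨k₁, rfl⟩ : X ∣ k := by simpa using dvd_iff_isRoot.mpr hk0
    rw [pow_succ']
    refine mul_dvd_mul_left X (ih fun s hs ↦ ?_)
    obtain ⟨m, hm⟩ := h s hs
    refine ⟨m, mul_left_cancel₀ (pow_ne_zero s (Int.cast_ne_zero.mpr hq0)) ?_⟩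
    rw [eval_mul, eval_X] at hm
    rw [hm]
    ring

end Polynomial

theorem stmt_19_general (q : ℕ) (hq : IsPrimePow q) (N : ℕ)
    (k : Polynomial ℚ)
    (h : ∀ s : ℕ, 1 ≤ s → ∃ m : ℤ, k.eval ((q : ℚ) ^ s) = m * (q : ℚ) ^ (s * N)) :
    (Polynomial.X : Polynomial ℚ) ^ N ∣ k :=
  X_pow_dvd_of_forall_eval_pow_eq (q := q) (Int.natCast_ne_zero.mpr hq.ne_zero)
    (by rw [Int.isUnit_iff_natAbs_eq, Int.natAbs_natCast]; exact hq.ne_one) N (by simpa using h)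

/-- Let `q` be a prime power and `N ≥ 1`.  If `k ∈ ℚ[z]` satisfies
`k(qˢ)/q^{sN} ∈ ℤ` for all `s ≥ 1`, then `z^N` divides `k(z)` in `ℚ[z]`. -/
theorem stmt_19 (q : ℕ) (hq : IsPrimePow q) (N : ℕ) (hN : 1 ≤ N)
    (k : Polynomial ℚ)
    (h : ∀ s : ℕ, 1 ≤ s → ∃ m : ℤ, k.eval ((q : ℚ) ^ s) = m * (q : ℚ) ^ (s * N)) :
    (Polynomial.X : Polynomial ℚ) ^ N ∣ k :=
  stmt_19_general q hq N k h
end
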